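/- arXiv:2603.00738 — 7 statements merged into one kernel-verified Lean document; each statement's English description precedes it below -/
import Mathlib

section
/- Let (Ω, F, P) be a probability space and ψ : Ω → ℝ a measurable function with ∫ e^ψ dP < ∞. Then ln ∫ e^ψ dP = sup over all probability measures Q on (Ω, F) that are absolutely continuous with respect to P, have finite Kullback–Leibler divergence KL(Q‖P), and for which ψ is Q-integrable, of the quantity ∫ ψ dQ − KL(Q‖P). -/
/-!
The upper bound is Gibbs' inequality `KL(Q‖G) ≥ 0` for the Gibbs measure `dG = e^ψ dP / ∫ e^ψ dP`,
since `ln (dQ/dG) = ln (dQ/dP) - ψ + ln ∫ e^ψ dP`. The Gibbs measure itself need not be admissible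
(`ψ` need not be `G`-integrable), so for the lower bound we restrict `P` to `{|ψ| ≤ n}` before
tilting: that Gibbs measure is admissible and its value `∫ ψ dQ - KL(Q‖P)` is
`ln ∫_{|ψ| ≤ n} e^ψ dP`, which tends to `ln ∫ e^ψ dP`.
-/

open MeasureTheory

/-- The Kullback-Leibler divergence of `Q` with respect to `P`,
`KL(Q‖P) = ∫ ln(dQ/dP) dQ`. -/
noncomputable def KLdiv {Ω : Type*} [MeasurableSpace Ω] (Q P : Measure Ω) : ℝ :=
  ∫ ω, Real.log ((Q.rnDeriv P ω).toReal) ∂Q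

open Real Set Filter Topology

section

variable {Ω : Type*} [MeasurableSpace Ω] {P Q : Measure Ω} {ψ : Ω → ℝ} {A : Set Ω}

lemma KLdiv_eq_integral_llr : KLdiv Q P = ∫ ω, llr Q P ω ∂Q := rfl

lemma integral_sub_KLdiv_le_log_integral_exp [SigmaFinite P] [IsProbabilityMeasure Q]
    (hint : Integrable (fun ω => exp (ψ ω)) P) (hQP : Q ≪ P) (hKL : Integrable (llr Q P) Q)
    (hψQ : Integrable ψ Q) :
    ∫ ω, ψ ω ∂Q - KLdiv Q P ≤ log (∫ ω, exp (ψ ω) ∂P) := by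
  have : NeZero P := ⟨fun hP => IsProbabilityMeasure.ne_zero Q
    (Measure.absolutelyContinuous_zero_iff.1 (hP ▸ hQP))⟩
  have : IsProbabilityMeasure (P.tilted ψ) := isProbabilityMeasure_tilted hint
  have hgibbs := InformationTheory.integral_llr_add_sub_measure_univ_nonneg
    (hQP.trans (absolutelyContinuous_tilted hint)) (integrable_llr_tilted_right hQP hψQ hKL hint)
  rw [integral_llr_tilted_right hQP hψQ hint hKL] at hgibbs
  simp only [probReal_univ, add_sub_cancel_right] at hgibbs
  rw [KLdiv_eq_integral_llr]
  linarith

lemma llr_restrict_self_ae_eq_zero [SigmaFinite P] (hA : MeasurableSet A) :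
    llr (P.restrict A) P =ᵐ[P.restrict A] 0 := by
  filter_upwards [ae_restrict_of_ae (Measure.rnDeriv_restrict_self P hA), ae_restrict_mem hA]
    with ω hω hωA
  simp [llr, hω, hωA]

lemma llr_restrict_tilted [SigmaFinite P] (hA : MeasurableSet A) (hψ : AEMeasurable ψ P)
    (hint : IntegrableOn (fun ω => exp (ψ ω)) A P) :
    llr ((P.restrict A).tilted ψ) P =ᵐ[(P.restrict A).tilted ψ]
      fun ω => ψ ω - log (∫ ω in A, exp (ψ ω) ∂P) := by
  refine (tilted_absolutelyContinuous _ _).ae_le ?_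
  filter_upwards [llr_tilted_left Measure.restrict_le_self.absolutelyContinuous hint hψ,
    llr_restrict_self_ae_eq_zero hA] with ω hω hω₀
  simp [hω, hω₀]

/-- The witness is the Gibbs measure `(P.restrict A).tilted ψ`. -/
lemma exists_integral_sub_KLdiv_eq_log_setIntegral_exp [IsFiniteMeasure P] (hψ : Measurable ψ)
    (hA : MeasurableSet A) (hZ : 0 < ∫ ω in A, exp (ψ ω) ∂P) {c : ℝ}
    (hψA : ∀ ω ∈ A, |ψ ω| ≤ c) :
    ∃ Q : Measure Ω, (IsProbabilityMeasure Q ∧ Q ≪ P ∧ Integrable (llr Q P) Q ∧ Integrable ψ Q) ∧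
      ∫ ω, ψ ω ∂Q - KLdiv Q P = log (∫ ω in A, exp (ψ ω) ∂P) := by
  have : NeZero (P.restrict A) := ⟨fun h => by simp [h] at hZ⟩
  have hψA_ae : ∀ᵐ ω ∂P.restrict A, |ψ ω| ≤ c := (ae_restrict_mem hA).mono hψA
  have hint : IntegrableOn (fun ω => exp (ψ ω)) A P :=
    Integrable.of_bound hψ.exp.aestronglyMeasurable (exp c) <| hψA_ae.mono fun ω hω => by
      simpa using exp_le_exp.2 (abs_le.1 hω).2
  set Q := (P.restrict A).tilted ψ
  have hQ : IsProbabilityMeasure Q := isProbabilityMeasure_tilted hint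
  have hψQ : Integrable ψ Q :=
    Integrable.of_bound hψ.aestronglyMeasurable c ((tilted_absolutelyContinuous _ _).ae_le hψA_ae)
  have hllr := llr_restrict_tilted hA hψ.aemeasurable hint
  refine ⟨Q, ⟨hQ, (tilted_absolutelyContinuous _ _).trans Measure.absolutelyContinuous_restrict,
    (integrable_congr hllr).2 (hψQ.sub (integrable_const _)), hψQ⟩, ?_⟩
  rw [KLdiv_eq_integral_llr, integral_congr_ae hllr, integral_sub hψQ (integrable_const _)]
  simp

lemma tendsto_setIntegral_abs_le {E : Type*} [NormedAddCommGroup E] [NormedSpace ℝ E]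
    {f : Ω → E} (hψ : Measurable ψ) (hf : Integrable f P) :
    Tendsto (fun n : ℕ => ∫ ω in {ω | |ψ ω| ≤ n}, f ω ∂P) atTop (𝓝 (∫ ω, f ω ∂P)) := by
  have hmono : Monotone fun n : ℕ => {ω | |ψ ω| ≤ n} :=
    fun m n hmn ω (hω : |ψ ω| ≤ m) => hω.trans (by exact_mod_cast hmn)
  have hunion : ⋃ n : ℕ, {ω | |ψ ω| ≤ n} = univ :=
    eq_univ_of_forall fun ω => mem_iUnion.2 (exists_nat_ge |ψ ω|)
  simpa [hunion] using tendsto_setIntegral_of_monotone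
    (fun n => measurableSet_le hψ.abs measurable_const) hmono hf.integrableOn

end

/-- Free Energy-Entropy Duality: the free energy `ln ∫ e^ψ dP` equals the supremum,
over probability measures `Q ≪ P` with finite KL divergence and `ψ` `Q`-integrable,
of `∫ ψ dQ − KL(Q‖P)`. -/
theorem free_energy_entropy_duality {Ω : Type*} [MeasurableSpace Ω]
    (P : Measure Ω) [IsProbabilityMeasure P] (ψ : Ω → ℝ) (hψ : Measurable ψ)
    (hint : Integrable (fun ω => Real.exp (ψ ω)) P) :
    Real.log (∫ ω, Real.exp (ψ ω) ∂P) =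
      ⨆ Q : {Q : Measure Ω // IsProbabilityMeasure Q ∧ Q ≪ P ∧
          Integrable (fun ω => Real.log ((Q.rnDeriv P ω).toReal)) Q ∧
          Integrable ψ Q},
        ((∫ ω, ψ ω ∂(Q : Measure Ω)) - KLdiv (Q : Measure Ω) P) := by
  have hZ := tendsto_setIntegral_abs_le hψ hint
  have hZ_pos := integral_exp_pos hint
  have hlower : ∀ w < log (∫ ω, exp (ψ ω) ∂P), ∃ Q : {Q : Measure Ω // IsProbabilityMeasure Q ∧
      Q ≪ P ∧ Integrable (fun ω => Real.log ((Q.rnDeriv P ω).toReal)) Q ∧ Integrable ψ Q},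
      w < ∫ ω, ψ ω ∂(Q : Measure Ω) - KLdiv Q P := by
    intro w hw
    obtain ⟨n, hn_pos, hwn⟩ := ((hZ.eventually_const_lt hZ_pos).and
      (((continuousAt_log hZ_pos.ne').tendsto.comp hZ).eventually_const_lt hw)).exists
    obtain ⟨Q, hQ, hval⟩ := exists_integral_sub_KLdiv_eq_log_setIntegral_exp hψ
      (measurableSet_le hψ.abs measurable_const) hn_pos fun ω hω => hω
    exact ⟨⟨Q, hQ⟩, hval ▸ hwn⟩
  have : Nonempty _ := ⟨(hlower _ (sub_one_lt _)).choose⟩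
  refine (ciSup_eq_of_forall_le_of_forall_lt_exists_gt (fun ⟨Q, hQ, hQP, hKL, hψQ⟩ => ?_)
    hlower).symm
  exact integral_sub_KLdiv_le_log_integral_exp hint hQP hKL hψQ
end

section
/- Let (Ω, F, P) be a probability space and ψ : Ω → ℝ a measurable function with ∫ e^ψ dP < ∞ and ∫ |ψ| e^ψ dP < ∞. Define the probability measure Q* by dQ*/dP = e^ψ / ∫ e^ψ dP. Then Q* is absolutely continuous with respect to P, ψ is Q*-integrable, KL(Q*‖P) < ∞, and ∫ ψ dQ* − KL(Q*‖P) = ln ∫ e^ψ dP; that is, Q* attains the supremum in the free energy–entropy duality. -/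
open MeasureTheory

/-- The tilted measure `Q*` with `dQ*/dP = e^ψ / ∫ e^ψ dP`. -/
noncomputable def tiltedMeasure {Ω : Type*} [MeasurableSpace Ω] (P : Measure Ω)
    (ψ : Ω → ℝ) : Measure Ω :=
  P.withDensity fun ω => ENNReal.ofReal (Real.exp (ψ ω) / ∫ ω', Real.exp (ψ ω') ∂P)

/-!
Since `dQ*/dP = e^ψ / Z` with `Z = ∫ e^ψ dP`, the log-density `ln(dQ*/dP)` equals `ψ - ln Z`
`Q*`-almost everywhere. Integrating against the probability measure `Q*` gives
`KL(Q*‖P) = ∫ ψ dQ* - ln Z`, and `ψ ∈ L¹(Q*)` is exactly `ψ e^ψ ∈ L¹(P)`.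
-/

namespace MeasureTheory

open Real

variable {Ω : Type*} [MeasurableSpace Ω] {μ : Measure Ω} {f : Ω → ℝ}

lemma tiltedMeasure_eq_tilted (μ : Measure Ω) (f : Ω → ℝ) : tiltedMeasure μ f = μ.tilted f :=
  rfl

lemma integrable_tilted_self (hf : Integrable (fun x ↦ exp (f x)) μ)
    (hf_mul : Integrable (fun x ↦ |f x| * exp (f x)) μ) : Integrable f (μ.tilted f) := by
  have hf_meas : AEMeasurable f μ := aemeasurable_of_aemeasurable_exp hf.1.aemeasurable
  refine (integrable_tilted_iff hf f).2 (hf_mul.mono' (by fun_prop) (.of_forall fun x ↦ ?_))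
  rw [smul_eq_mul, norm_mul, norm_of_nonneg (exp_pos _).le, Real.norm_eq_abs, mul_comm]

lemma log_rnDeriv_tilted_self_ae_eq [SigmaFinite μ] (hf : Integrable (fun x ↦ exp (f x)) μ) :
    (fun x ↦ log ((μ.tilted f).rnDeriv μ x).toReal)
      =ᵐ[μ.tilted f] fun x ↦ f x - log (∫ x, exp (f x) ∂μ) :=
  (tilted_absolutelyContinuous μ f).ae_eq (log_rnDeriv_tilted_left_self hf)

lemma integrable_log_rnDeriv_tilted_self [SigmaFinite μ]
    (hf : Integrable (fun x ↦ exp (f x)) μ) (hf_tilted : Integrable f (μ.tilted f)) :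
    Integrable (fun x ↦ log ((μ.tilted f).rnDeriv μ x).toReal) (μ.tilted f) :=
  (hf_tilted.sub (integrable_const _)).congr (log_rnDeriv_tilted_self_ae_eq hf).symm

lemma KLdiv_tilted_self [SigmaFinite μ] [NeZero μ]
    (hf : Integrable (fun x ↦ exp (f x)) μ) (hf_tilted : Integrable f (μ.tilted f)) :
    KLdiv (μ.tilted f) μ = ∫ x, f x ∂(μ.tilted f) - log (∫ x, exp (f x) ∂μ) := by
  have := isProbabilityMeasure_tilted hf
  rw [KLdiv, integral_congr_ae (log_rnDeriv_tilted_self_ae_eq hf),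
    integral_sub hf_tilted (integrable_const _), integral_const, probReal_univ, one_smul]

end MeasureTheory

theorem tilted_measure_attains_free_energy_general {Ω : Type*} [MeasurableSpace Ω]
    (P : Measure Ω) [IsProbabilityMeasure P] (ψ : Ω → ℝ)
    (h1 : Integrable (fun ω => Real.exp (ψ ω)) P)
    (h2 : Integrable (fun ω => |ψ ω| * Real.exp (ψ ω)) P) :
    IsProbabilityMeasure (tiltedMeasure P ψ) ∧
    tiltedMeasure P ψ ≪ P ∧
    Integrable ψ (tiltedMeasure P ψ) ∧
    Integrable (fun ω => Real.log (((tiltedMeasure P ψ).rnDeriv P ω).toReal))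
      (tiltedMeasure P ψ) ∧
    (∫ ω, ψ ω ∂(tiltedMeasure P ψ)) - KLdiv (tiltedMeasure P ψ) P
      = Real.log (∫ ω, Real.exp (ψ ω) ∂P) := by
  rw [tiltedMeasure_eq_tilted]
  have hψ_tilted : Integrable ψ (P.tilted ψ) := integrable_tilted_self h1 h2
  refine ⟨isProbabilityMeasure_tilted h1, tilted_absolutelyContinuous P ψ, hψ_tilted,
    integrable_log_rnDeriv_tilted_self h1 hψ_tilted, ?_⟩
  rw [KLdiv_tilted_self h1 hψ_tilted]
  ring

/-- The Gibbs measure `Q*` with density `e^ψ / ∫ e^ψ dP` with respect to `P` attains the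
supremum in the free energy-entropy duality: it is a probability measure absolutely
continuous w.r.t. `P`, `ψ` is `Q*`-integrable, its KL divergence is finite (the defining
integral is integrable), and `∫ ψ dQ* − KL(Q*‖P) = ln ∫ e^ψ dP`. -/
theorem tilted_measure_attains_free_energy {Ω : Type*} [MeasurableSpace Ω]
    (P : Measure Ω) [IsProbabilityMeasure P] (ψ : Ω → ℝ) (hψ : Measurable ψ)
    (h1 : Integrable (fun ω => Real.exp (ψ ω)) P)
    (h2 : Integrable (fun ω => |ψ ω| * Real.exp (ψ ω)) P) :
    IsProbabilityMeasure (tiltedMeasure P ψ) ∧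
    tiltedMeasure P ψ ≪ P ∧
    Integrable ψ (tiltedMeasure P ψ) ∧
    Integrable (fun ω => Real.log (((tiltedMeasure P ψ).rnDeriv P ω).toReal))
      (tiltedMeasure P ψ) ∧
    (∫ ω, ψ ω ∂(tiltedMeasure P ψ)) - KLdiv (tiltedMeasure P ψ) P
      = Real.log (∫ ω, Real.exp (ψ ω) ∂P) :=
  tilted_measure_attains_free_energy_general P ψ h1 h2
end

section
/- Fix θ > 0, Δt > 0, Σ ∈ ℝ^{m×d}, A ∈ ℝ^{m×n}, a ∈ ℝ^m, Ξ ∈ ℝ^d, Λ ∈ ℝ^{n×d}, b ∈ ℝ^n, B̃ ∈ ℝ^{n×n}, a symmetric matrix P ∈ ℝ^{n×n}, p ∈ ℝ^n, a symmetric positive definite Ψ ∈ ℝ^{m×m}, and x ∈ ℝ^n. Set 𝒜 := ΛᵀPΛΔt − I_d and define F(h,γ,η) := (θ/2)(h+η)ᵀΣΣᵀ(h+η)Δt − θ(h+η)ᵀ(a+Ax)Δt − θ((h+η)ᵀΣ − Ξᵀ)γΔt + (1/2)γᵀ𝒜γΔt + γᵀΛᵀ(P(bΔt+B̃x)+p)Δt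 − (1/2)ηᵀΨ⁻¹η for h, η ∈ ℝ^m, γ ∈ ℝ^d. Assume ΣΣᵀ is positive definite, 𝒜 is negative definite, and Ψ⁻¹ − θΔt·Σ(I_d − θ𝒜⁻¹)Σᵀ is positive definite. Then there exists a unique triple (h*, γ*, η*) ∈ ℝ^m × ℝ^d × ℝ^m such that F(h*, γ, η) ≤ F(h*, γ*, η*) ≤ F(h, γ*, η*) for all h, η ∈ ℝ^m and γ ∈ ℝ^d; moreover inf over h of sup over (γ, η) of F(h,γ,η) equals sup over (γ, η) of inf over h of F(h,γ,η), and both equal F(h*, γ*, η*). -/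
/-!
`F` is a quadratic function of `h` and of the adversarial pair `(γ, η)`: strictly convex in `h`
because `ΣΣᵀ ≻ 0`, and jointly strictly concave in `(γ, η)` because its negated `(γ, η)`-Hessian is
the block matrix `[[-Δt𝒜, θΔtΣᵀ], [θΔtΣ, Ψ⁻¹ - θΔtΣΣᵀ]]`, whose top-left block is positive
definite and whose Schur complement is exactly `Ψ⁻¹ − θΔt·Σ(I_d − θ𝒜⁻¹)Σᵀ`.

For a convex–concave quadratic `Qa x + B x y - Qc y + ℓ x + μ y` the saddle points are exactly the
zeros of the gradient, i.e. the solutions of a linear system `T (x, y) = (-ℓ, -μ)`. Testing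
`T (x, y)` against `(x, -y)` gives `2 (Qa x + Qc y)`, so `T` is injective, hence bijective in finite
dimension: the saddle point exists and is unique. The minimax identities hold at any saddle point as
soon as the inner suprema and infima are finite, and they are, since each partial problem is a
strictly convex quadratic minimisation, which has a solution.
-/

open Matrix

/-- The control-dependent part `F` of the one-step Hamiltonian of the
relative-entropy-penalized stochastic game, with `𝒜 = ΛᵀPΛΔt − I_d`:
`F(h,γ,η) = (θ/2)(h+η)ᵀΣΣᵀ(h+η)Δt − θ(h+η)ᵀ(a+Ax)Δt − θ((h+η)ᵀΣ − Ξᵀ)γΔt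
  + (1/2)γᵀ𝒜γΔt + γᵀΛᵀ(P(bΔt+B̃x)+p)Δt − (1/2)ηᵀΨ⁻¹η`. -/
noncomputable def FFun {m n d : ℕ} (θ Δt : ℝ) (S : Matrix (Fin m) (Fin d) ℝ)
    (A : Matrix (Fin m) (Fin n) ℝ) (a : Fin m → ℝ) (Ξ : Fin d → ℝ)
    (Λ : Matrix (Fin n) (Fin d) ℝ) (b : Fin n → ℝ) (Bt : Matrix (Fin n) (Fin n) ℝ)
    (P : Matrix (Fin n) (Fin n) ℝ) (p : Fin n → ℝ) (Ψ : Matrix (Fin m) (Fin m) ℝ)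
    (x : Fin n → ℝ) (h : Fin m → ℝ) (γ : Fin d → ℝ) (η : Fin m → ℝ) : ℝ :=
  (θ / 2) * ((h + η) ⬝ᵥ ((S * Sᵀ) *ᵥ (h + η))) * Δt
    - θ * ((h + η) ⬝ᵥ (a + A *ᵥ x)) * Δt
    - θ * (((Sᵀ *ᵥ (h + η)) - Ξ) ⬝ᵥ γ) * Δt
    + (1 / 2 : ℝ) * (γ ⬝ᵥ ((Δt • (Λᵀ * P * Λ) - 1) *ᵥ γ)) * Δt
    + (γ ⬝ᵥ (Λᵀ *ᵥ (P *ᵥ (Δt • b + Bt *ᵥ x) + p))) * Δt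
    - (1 / 2 : ℝ) * (η ⬝ᵥ (Ψ⁻¹ *ᵥ η))

open Set Module QuadraticMap

section SaddleValue

variable {ι κ β : Type*} {f : ι → κ → β} {a : ι} {b : κ}

theorem isSaddlePointOn_univ_iff [Preorder β] :
    IsSaddlePointOn univ univ f a b ↔ IsMinOn (f · b) univ a ∧ IsMaxOn (f a) univ b := by
  simp only [isMinOn_univ_iff, isMaxOn_univ_iff]
  exact ⟨fun h => ⟨fun x => h x trivial b trivial, fun y => h a trivial y trivial⟩,
    fun h x _ y _ => (h.2 y).trans (h.1 x)⟩

variable [ConditionallyCompleteLattice β]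

theorem IsSaddlePointOn.ciInf_ciSup_eq (h : IsSaddlePointOn univ univ f a b)
    (hbdd : ∀ x, BddAbove (range (f x))) : ⨅ x, ⨆ y, f x y = f a b := by
  have : Nonempty ι := ⟨a⟩
  have : Nonempty κ := ⟨b⟩
  have hlow : ∀ x, f a b ≤ ⨆ y, f x y :=
    fun x => (h x trivial b trivial).trans (le_ciSup (hbdd x) b)
  exact le_antisymm ((ciInf_le ⟨f a b, forall_mem_range.2 hlow⟩ a).trans
    (ciSup_le fun y => h a trivial y trivial)) (le_ciInf hlow)

theorem IsSaddlePointOn.ciSup_ciInf_eq (h : IsSaddlePointOn univ univ f a b)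
    (hbdd : ∀ y, BddBelow (range (f · y))) : ⨆ y, ⨅ x, f x y = f a b := by
  have : Nonempty ι := ⟨a⟩
  have : Nonempty κ := ⟨b⟩
  have hup : ∀ y, ⨅ x, f x y ≤ f a b :=
    fun y => (ciInf_le (hbdd y) a).trans (h a trivial y trivial)
  exact le_antisymm (ciSup_le hup) ((le_ciInf fun x => h x trivial b trivial).trans
    (le_ciSup ⟨f a b, forall_mem_range.2 hup⟩ b))

end SaddleValue

theorem eq_zero_of_forall_nonneg_mul_add_sq_mul {L q : ℝ}
    (h : ∀ t : ℝ, 0 ≤ t * L + t ^ 2 * q) : L = 0 := by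
  have hq : 0 < |q| + 1 := by positivity
  have := h (-L / (|q| + 1))
  field_simp at this
  nlinarith [le_abs_self q, sq_nonneg L]

namespace QuadraticMap

variable {E : Type*} [AddCommGroup E] [Module ℝ E] {Q : QuadraticForm ℝ E} {φ : E →ₗ[ℝ] ℝ}
  {g : E → ℝ} {c : ℝ}

theorem add_linear_apply_add_smul (hg : ∀ x, g x = Q x + φ x + c) (a δ : E) (t : ℝ) :
    g (a + t • δ) = g a + t * (Q.polarBilin a + φ) δ + t ^ 2 * Q δ := by
  have hQ : Q (a + t • δ) = Q a + t * polar Q a δ + t ^ 2 * Q δ := by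
    have h := polar_smul_right Q t a δ
    simp only [polar, QuadraticMap.map_smul, smul_eq_mul] at h ⊢
    linear_combination h
  simp only [hg, hQ, map_add, map_smul, smul_eq_mul, LinearMap.add_apply, polarBilin_apply_apply]
  ring

theorem isMinOn_add_linear_iff (hQ : ∀ x, 0 ≤ Q x) (hg : ∀ x, g x = Q x + φ x + c) {a : E} :
    IsMinOn g univ a ↔ Q.polarBilin a = -φ := by
  rw [isMinOn_univ_iff, ← add_eq_zero_iff_eq_neg]
  constructor
  · refine fun hmin => LinearMap.ext fun δ =>
      eq_zero_of_forall_nonneg_mul_add_sq_mul (q := Q δ) fun t => ?_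
    have := hmin (a + t • δ)
    rw [add_linear_apply_add_smul hg] at this
    linarith
  · intro hcrit x
    have := add_linear_apply_add_smul hg a (x - a) 1
    rw [hcrit, one_smul, add_sub_cancel] at this
    simp only [this, LinearMap.zero_apply]
    linarith [hQ (x - a)]

theorem PosDef.surjective_polarBilin [FiniteDimensional ℝ E] (hQ : Q.PosDef) :
    Function.Surjective Q.polarBilin := by
  refine (LinearMap.injective_iff_surjective_of_finrank_eq_finrank
    Subspace.dual_finrank_eq.symm).1 ((injective_iff_map_eq_zero _).2 fun x hx => ?_)
  refine hQ.anisotropic x ?_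
  have := congr($hx x)
  simp only [polarBilin_apply_apply, polar_self, LinearMap.zero_apply, nsmul_eq_mul] at this
  simpa using this

theorem PosDef.exists_isMinOn_add_linear [FiniteDimensional ℝ E] (hQ : Q.PosDef)
    (hg : ∀ x, g x = Q x + φ x + c) : ∃ a, IsMinOn g univ a := by
  obtain ⟨a, ha⟩ := hQ.surjective_polarBilin (-φ)
  exact ⟨a, (isMinOn_add_linear_iff hQ.nonneg hg).2 ha⟩

end QuadraticMap

section QuadraticSaddle

variable {E F : Type*} [AddCommGroup E] [Module ℝ E] [AddCommGroup F] [Module ℝ F]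
  {Qa : QuadraticForm ℝ E} {Qc : QuadraticForm ℝ F} {B : E →ₗ[ℝ] F →ₗ[ℝ] ℝ}
  {ℓ : E →ₗ[ℝ] ℝ} {μ : F →ₗ[ℝ] ℝ} {f : E → F → ℝ}

noncomputable def saddleOperator (Qa : QuadraticForm ℝ E) (Qc : QuadraticForm ℝ F)
    (B : E →ₗ[ℝ] F →ₗ[ℝ] ℝ) : E × F →ₗ[ℝ] Dual ℝ E × Dual ℝ F :=
  (Qa.polarBilin ∘ₗ LinearMap.fst ℝ E F + B.flip ∘ₗ LinearMap.snd ℝ E F).prod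
    (B ∘ₗ LinearMap.fst ℝ E F - Qc.polarBilin ∘ₗ LinearMap.snd ℝ E F)

theorem saddleOperator_apply (p : E × F) :
    saddleOperator Qa Qc B p = (Qa.polarBilin p.1 + B.flip p.2, B p.1 - Qc.polarBilin p.2) :=
  rfl

theorem isSaddlePointOn_univ_iff_saddleOperator (hQa : ∀ x, 0 ≤ Qa x) (hQc : ∀ y, 0 ≤ Qc y)
    (hf : ∀ x y, f x y = Qa x + B x y - Qc y + ℓ x + μ y) {p : E × F} :
    IsSaddlePointOn univ univ f p.1 p.2 ↔ saddleOperator Qa Qc B p = (-ℓ, -μ) := by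
  have hmax : IsMaxOn (f p.1) univ p.2 ↔ IsMinOn (fun y => -f p.1 y) univ p.2 :=
    ⟨IsMaxOn.neg, fun h => by simpa using h.neg⟩
  rw [isSaddlePointOn_univ_iff, hmax,
    isMinOn_add_linear_iff hQa (φ := B.flip p.2 + ℓ) (c := μ p.2 - Qc p.2)
      (fun x => by simp only [hf, LinearMap.add_apply, LinearMap.flip_apply]; ring),
    isMinOn_add_linear_iff hQc (φ := -(B p.1 + μ)) (c := -(Qa p.1 + ℓ p.1))
      (fun y => by simp only [hf, LinearMap.neg_apply, LinearMap.add_apply]; ring),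
    saddleOperator_apply, Prod.mk.injEq, neg_neg]
  constructor <;> rintro ⟨h1, h2⟩ <;>
    exact ⟨by linear_combination (norm := module) h1, by linear_combination (norm := module) -h2⟩

theorem saddleOperator_injective (hQa : Qa.PosDef) (hQc : Qc.PosDef) :
    Function.Injective (saddleOperator Qa Qc B) := by
  refine (injective_iff_map_eq_zero _).2 fun p hp => ?_
  have h1 := congr($(congr(Prod.fst $hp)) p.1)
  have h2 := congr($(congr(Prod.snd $hp)) p.2)
  simp only [saddleOperator_apply, LinearMap.add_apply, LinearMap.sub_apply,
    polarBilin_apply_apply, polar_self, LinearMap.flip_apply, Prod.fst_zero, Prod.snd_zero,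
    LinearMap.zero_apply, nsmul_eq_mul, Nat.cast_ofNat] at h1 h2
  have hx := hQa.nonneg p.1
  have hy := hQc.nonneg p.2
  exact Prod.ext (hQa.anisotropic _ (by linarith)) (hQc.anisotropic _ (by linarith))

theorem saddleOperator_bijective [FiniteDimensional ℝ E] [FiniteDimensional ℝ F]
    (hQa : Qa.PosDef) (hQc : Qc.PosDef) : Function.Bijective (saddleOperator Qa Qc B) :=
  ⟨saddleOperator_injective hQa hQc, (LinearMap.injective_iff_surjective_of_finrank_eq_finrank
    (by simp [finrank_prod])).1 (saddleOperator_injective hQa hQc)⟩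

theorem existsUnique_isSaddlePointOn [FiniteDimensional ℝ E] [FiniteDimensional ℝ F]
    (hQa : Qa.PosDef) (hQc : Qc.PosDef) (hf : ∀ x y, f x y = Qa x + B x y - Qc y + ℓ x + μ y) :
    ∃! p : E × F, IsSaddlePointOn univ univ f p.1 p.2 := by
  simp_rw [isSaddlePointOn_univ_iff_saddleOperator hQa.nonneg hQc.nonneg hf]
  exact (saddleOperator_bijective hQa hQc).existsUnique _

theorem bddAbove_range_of_quadratic [FiniteDimensional ℝ F] (hQc : Qc.PosDef)
    (hf : ∀ x y, f x y = Qa x + B x y - Qc y + ℓ x + μ y) (x : E) : BddAbove (range (f x)) := by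
  obtain ⟨b, hb⟩ := hQc.exists_isMinOn_add_linear (g := fun y => -f x y) (φ := -(B x + μ))
    (c := -(Qa x + ℓ x))
    (fun y => by simp only [hf, LinearMap.neg_apply, LinearMap.add_apply]; ring)
  simpa [image_univ] using (by simpa using hb.neg : IsMaxOn (f x) univ b).bddAbove

theorem bddBelow_range_of_quadratic [FiniteDimensional ℝ E] (hQa : Qa.PosDef)
    (hf : ∀ x y, f x y = Qa x + B x y - Qc y + ℓ x + μ y) (y : F) :
    BddBelow (range (f · y)) := by
  obtain ⟨a, ha⟩ := hQa.exists_isMinOn_add_linear (g := (f · y)) (φ := B.flip y + ℓ)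
    (c := μ y - Qc y) (fun x => by simp only [hf, LinearMap.add_apply, LinearMap.flip_apply]; ring)
  simpa [image_univ] using ha.bddBelow

end QuadraticSaddle

theorem adversaryForm_schur_complement {ι κ : Type*} [Fintype κ] [DecidableEq κ] {θ Δt : ℝ}
    (hΔt : Δt ≠ 0) (S : Matrix ι κ ℝ) {𝒜 : Matrix κ κ ℝ} (h𝒜 : IsUnit 𝒜.det) (K : Matrix ι ι ℝ) :
    K - (θ * Δt) • (S * Sᵀ) - ((θ * Δt) • Sᵀ)ᴴ * (Δt • -𝒜)⁻¹ * ((θ * Δt) • Sᵀ)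
      = K - (θ * Δt) • (S * (1 - θ • 𝒜⁻¹) * Sᵀ) := by
  have hinv : (Δt • -𝒜)⁻¹ = -(Δt⁻¹ • 𝒜⁻¹) := inv_eq_left_inv <| by
    simp [smul_smul, nonsing_inv_mul _ h𝒜, hΔt]
  rw [hinv, conjTranspose_eq_transpose_of_trivial, transpose_smul, transpose_transpose]
  simp only [Matrix.mul_sub, Matrix.sub_mul, Matrix.smul_mul, Matrix.mul_smul, Matrix.mul_neg,
    Matrix.neg_mul, Matrix.mul_one, smul_smul, Matrix.mul_assoc]
  match_scalars <;> field_simp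

section Hamiltonian

variable {ι κ : Type*} [Fintype ι] [Fintype κ]

open scoped ComplexOrder in
theorem Matrix.PosDef.posDef_fromBlocks₁₁ [DecidableEq ι] [DecidableEq κ] {𝕜 : Type*} [RCLike 𝕜]
    {A : Matrix κ κ 𝕜} (B : Matrix κ ι 𝕜) (D : Matrix ι ι 𝕜) (hA : A.PosDef)
    (hS : (D - Bᴴ * A⁻¹ * B).PosDef) : (fromBlocks A B Bᴴ D).PosDef := by
  have : Invertible A := hA.isUnit.invertible
  refine ((hA.fromBlocks₁₁ B D).2 hS.posSemidef).posDef_iff_det_ne_zero.2 ?_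
  rw [det_fromBlocks₁₁, invOf_eq_nonsing_inv]
  exact mul_ne_zero hA.det_pos.ne' hS.det_pos.ne'

theorem Matrix.sumElim_dotProduct_fromBlocks_mulVec {R : Type*} [CommRing R]
    (A : Matrix κ κ R) (B : Matrix κ ι R) (D : Matrix ι ι R) (x : κ → R) (y : ι → R) :
    Sum.elim x y ⬝ᵥ fromBlocks A B Bᵀ D *ᵥ Sum.elim x y
      = x ⬝ᵥ A *ᵥ x + 2 * (x ⬝ᵥ B *ᵥ y) + y ⬝ᵥ D *ᵥ y := by
  rw [fromBlocks_mulVec, sumElim_dotProduct_sumElim, Sum.elim_comp_inl, Sum.elim_comp_inr,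
    dotProduct_add, dotProduct_add, dotProduct_mulVec y Bᵀ, vecMul_transpose, dotProduct_comm _ x]
  ring

noncomputable def controlForm [DecidableEq ι] (α : ℝ) (S : Matrix ι κ ℝ) :
    QuadraticForm ℝ (ι → ℝ) :=
  (α / 2) • (S * Sᵀ).toQuadraticForm'

/-- Half the negated `(γ, η)`-Hessian of `F`, as a block matrix acting on `γ ⊕ η`. -/
noncomputable def adversaryForm [DecidableEq ι] [DecidableEq κ] (θ Δt : ℝ) (S : Matrix ι κ ℝ)
    (𝒜 : Matrix κ κ ℝ) (K : Matrix ι ι ℝ) : QuadraticForm ℝ ((κ → ℝ) × (ι → ℝ)) :=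
  ((1 / 2 : ℝ) • (fromBlocks (Δt • -𝒜) ((θ * Δt) • Sᵀ) ((θ * Δt) • Sᵀ)ᵀ
    (K - (θ * Δt) • (S * Sᵀ))).toQuadraticForm').comp
    (LinearEquiv.sumArrowLequivProdArrow κ ι ℝ ℝ).symm.toLinearMap

theorem controlForm_apply [DecidableEq ι] (α : ℝ) (S : Matrix ι κ ℝ) (h : ι → ℝ) :
    controlForm α S h = α / 2 * (h ⬝ᵥ (S * Sᵀ) *ᵥ h) := by
  simp [controlForm, toQuadraticForm', toLinearMap₂'_apply']

theorem adversaryForm_apply [DecidableEq ι] [DecidableEq κ] (θ Δt : ℝ) (S : Matrix ι κ ℝ)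
    (𝒜 : Matrix κ κ ℝ) (K : Matrix ι ι ℝ) (γ : κ → ℝ) (η : ι → ℝ) :
    adversaryForm θ Δt S 𝒜 K (γ, η) = 1 / 2 * (Sum.elim γ η ⬝ᵥ
      fromBlocks (Δt • -𝒜) ((θ * Δt) • Sᵀ) ((θ * Δt) • Sᵀ)ᵀ (K - (θ * Δt) • (S * Sᵀ))
        *ᵥ Sum.elim γ η) := by
  simp [adversaryForm, toQuadraticForm', toLinearMap₂'_apply']
  rfl

theorem controlForm_posDef [DecidableEq ι] {α : ℝ} (hα : 0 < α) {S : Matrix ι κ ℝ}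
    (hS : (S * Sᵀ).PosDef) : (controlForm α S).PosDef :=
  hS.toQuadraticForm'.smul (half_pos hα)

theorem adversaryForm_posDef [DecidableEq ι] [DecidableEq κ] {θ Δt : ℝ} (hΔt : 0 < Δt)
    {S : Matrix ι κ ℝ} {𝒜 : Matrix κ κ ℝ} {K : Matrix ι ι ℝ} (h𝒜 : (-𝒜).PosDef)
    (hK : (K - (θ * Δt) • (S * (1 - θ • 𝒜⁻¹) * Sᵀ)).PosDef) :
    (adversaryForm θ Δt S 𝒜 K).PosDef := by
  rintro ⟨γ, η⟩ hq
  have h𝒜det : IsUnit 𝒜.det := (isUnit_iff_isUnit_det _).1 (by simpa using h𝒜.isUnit.neg)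
  have hblk := (h𝒜.smul hΔt).posDef_fromBlocks₁₁ ((θ * Δt) • Sᵀ) (K - (θ * Δt) • (S * Sᵀ))
    (by rwa [adversaryForm_schur_complement hΔt.ne' S h𝒜det])
  rw [conjTranspose_eq_transpose_of_trivial] at hblk
  have hne : Sum.elim γ η ≠ 0 :=
    (LinearEquiv.sumArrowLequivProdArrow κ ι ℝ ℝ).symm.map_ne_zero_iff.2 hq
  rw [adversaryForm_apply]
  exact mul_pos one_half_pos (by simpa using hblk.dotProduct_mulVec_pos hne)

end Hamiltonian

theorem exists_FFun_eq_quadratic {m n d : ℕ} (θ Δt : ℝ) (S : Matrix (Fin m) (Fin d) ℝ)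
    (A : Matrix (Fin m) (Fin n) ℝ) (a : Fin m → ℝ) (Ξ : Fin d → ℝ)
    (Λ : Matrix (Fin n) (Fin d) ℝ) (b : Fin n → ℝ) (Bt : Matrix (Fin n) (Fin n) ℝ)
    (P : Matrix (Fin n) (Fin n) ℝ) (p : Fin n → ℝ) (Ψ : Matrix (Fin m) (Fin m) ℝ)
    (x : Fin n → ℝ) :
    ∃ (B : (Fin m → ℝ) →ₗ[ℝ] (Fin d → ℝ) × (Fin m → ℝ) →ₗ[ℝ] ℝ) (ℓ : (Fin m → ℝ) →ₗ[ℝ] ℝ)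
      (μ : (Fin d → ℝ) × (Fin m → ℝ) →ₗ[ℝ] ℝ), ∀ h γ η,
      FFun θ Δt S A a Ξ Λ b Bt P p Ψ x h γ η
        = controlForm (θ * Δt) S h + B h (γ, η)
          - adversaryForm θ Δt S (Δt • (Λᵀ * P * Λ) - 1) Ψ⁻¹ (γ, η) + ℓ h + μ (γ, η) := by
  set c := a + A *ᵥ x
  set w := (θ * Δt) • Ξ + Δt • (Λᵀ *ᵥ (P *ᵥ (Δt • b + Bt *ᵥ x) + p))
  refine ⟨(dotProductBilin ℝ ℝ).compl₂ ((θ * Δt) • ((S * Sᵀ).mulVecLin ∘ₗ LinearMap.snd ℝ _ _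
      - S.mulVecLin ∘ₗ LinearMap.fst ℝ _ _)),
    -(θ * Δt) • (dotProductBilin ℝ ℝ).flip c,
    (dotProductBilin ℝ ℝ).flip w ∘ₗ LinearMap.fst ℝ _ _
      - (θ * Δt) • ((dotProductBilin ℝ ℝ).flip c ∘ₗ LinearMap.snd ℝ _ _), fun h γ η => ?_⟩
  have hMsymm : η ⬝ᵥ (S * Sᵀ) *ᵥ h = h ⬝ᵥ (S * Sᵀ) *ᵥ η := by
    rw [dotProduct_mulVec, ← mulVec_transpose, transpose_mul, transpose_transpose, dotProduct_comm]
  have hStrans : ∀ v, Sᵀ *ᵥ v ⬝ᵥ γ = v ⬝ᵥ S *ᵥ γ := fun v => by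
    rw [mulVec_transpose, ← dotProduct_mulVec]
  rw [controlForm_apply, adversaryForm_apply, sumElim_dotProduct_fromBlocks_mulVec]
  simp only [FFun, LinearMap.compl₂_apply, LinearMap.flip_apply, dotProductBilin_apply_apply,
    LinearMap.smul_apply, LinearMap.sub_apply, LinearMap.comp_apply, mulVecLin_apply,
    LinearMap.fst_apply, LinearMap.snd_apply, smul_eq_mul, sub_mulVec, mulVec_add, smul_mulVec,
    mulVec_smul, neg_mulVec, one_mulVec, dotProduct_add, add_dotProduct, dotProduct_sub,
    sub_dotProduct, dotProduct_smul, dotProduct_neg, w, c]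
  rw [hMsymm, hStrans, hStrans, dotProduct_comm γ (Sᵀ *ᵥ η), hStrans, dotProduct_comm Ξ]
  ring

theorem F_saddle_point_and_minimax_general {m n d : ℕ} (θ Δt : ℝ) (hθ : 0 < θ) (hΔt : 0 < Δt)
    (S : Matrix (Fin m) (Fin d) ℝ) (hS : (S * Sᵀ).PosDef)
    (A : Matrix (Fin m) (Fin n) ℝ) (a : Fin m → ℝ) (Ξ : Fin d → ℝ)
    (Λ : Matrix (Fin n) (Fin d) ℝ) (b : Fin n → ℝ) (Bt : Matrix (Fin n) (Fin n) ℝ)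
    (P : Matrix (Fin n) (Fin n) ℝ) (p : Fin n → ℝ)
    (Ψ : Matrix (Fin m) (Fin m) ℝ) (x : Fin n → ℝ)
    (h𝒜 : (-(Δt • (Λᵀ * P * Λ) - (1 : Matrix (Fin d) (Fin d) ℝ))).PosDef)
    (hexp : (Ψ⁻¹ - (θ * Δt) •
        (S * ((1 : Matrix (Fin d) (Fin d) ℝ)
              - θ • (Δt • (Λᵀ * P * Λ) - (1 : Matrix (Fin d) (Fin d) ℝ))⁻¹) * Sᵀ)).PosDef) :
    ∃ s : (Fin m → ℝ) × (Fin d → ℝ) × (Fin m → ℝ),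
      (∀ (γ : Fin d → ℝ) (η : Fin m → ℝ),
          FFun θ Δt S A a Ξ Λ b Bt P p Ψ x s.1 γ η
            ≤ FFun θ Δt S A a Ξ Λ b Bt P p Ψ x s.1 s.2.1 s.2.2) ∧
      (∀ h : Fin m → ℝ,
          FFun θ Δt S A a Ξ Λ b Bt P p Ψ x s.1 s.2.1 s.2.2
            ≤ FFun θ Δt S A a Ξ Λ b Bt P p Ψ x h s.2.1 s.2.2) ∧
      (∀ s' : (Fin m → ℝ) × (Fin d → ℝ) × (Fin m → ℝ),
          ((∀ (γ : Fin d → ℝ) (η : Fin m → ℝ),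
              FFun θ Δt S A a Ξ Λ b Bt P p Ψ x s'.1 γ η
                ≤ FFun θ Δt S A a Ξ Λ b Bt P p Ψ x s'.1 s'.2.1 s'.2.2) ∧
           (∀ h : Fin m → ℝ,
              FFun θ Δt S A a Ξ Λ b Bt P p Ψ x s'.1 s'.2.1 s'.2.2
                ≤ FFun θ Δt S A a Ξ Λ b Bt P p Ψ x h s'.2.1 s'.2.2)) → s' = s) ∧
      (⨅ h : Fin m → ℝ, ⨆ q : (Fin d → ℝ) × (Fin m → ℝ),
          FFun θ Δt S A a Ξ Λ b Bt P p Ψ x h q.1 q.2)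
        = FFun θ Δt S A a Ξ Λ b Bt P p Ψ x s.1 s.2.1 s.2.2 ∧
      (⨆ q : (Fin d → ℝ) × (Fin m → ℝ), ⨅ h : Fin m → ℝ,
          FFun θ Δt S A a Ξ Λ b Bt P p Ψ x h q.1 q.2)
        = FFun θ Δt S A a Ξ Λ b Bt P p Ψ x s.1 s.2.1 s.2.2 := by
  obtain ⟨B, ℓ, μ, hF⟩ := exists_FFun_eq_quadratic θ Δt S A a Ξ Λ b Bt P p Ψ x
  have hQa := controlForm_posDef (mul_pos hθ hΔt) hS
  have hQc := adversaryForm_posDef hΔt h𝒜 hexp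
  have hf (h : Fin m → ℝ) (q : (Fin d → ℝ) × (Fin m → ℝ)) := hF h q.1 q.2
  obtain ⟨s, hs, huniq⟩ := existsUnique_isSaddlePointOn hQa hQc hf
  obtain ⟨hmin, hmax⟩ := isSaddlePointOn_univ_iff.1 hs
  rw [isMinOn_univ_iff] at hmin
  rw [isMaxOn_univ_iff] at hmax
  refine ⟨s, fun γ η => hmax (γ, η), hmin, fun s' ⟨hmax', hmin'⟩ => huniq s' ?_,
    hs.ciInf_ciSup_eq (bddAbove_range_of_quadratic hQc hf),
    hs.ciSup_ciInf_eq (bddBelow_range_of_quadratic hQa hf)⟩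
  exact isSaddlePointOn_univ_iff.2
    ⟨isMinOn_univ_iff.2 hmin', isMaxOn_univ_iff.2 fun q => hmax' q.1 q.2⟩

/-- Existence of a unique saddle point of `F` and the minimax equality, under the
no-redundant-assets condition, `𝒜 ≺ 0`, and the exploration-covariance bound
`Ψ⁻¹ − θΔt·Σ(I_d − θ𝒜⁻¹)Σᵀ ≻ 0`. -/
theorem F_saddle_point_and_minimax {m n d : ℕ} (θ Δt : ℝ) (hθ : 0 < θ) (hΔt : 0 < Δt)
    (S : Matrix (Fin m) (Fin d) ℝ) (hS : (S * Sᵀ).PosDef)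
    (A : Matrix (Fin m) (Fin n) ℝ) (a : Fin m → ℝ) (Ξ : Fin d → ℝ)
    (Λ : Matrix (Fin n) (Fin d) ℝ) (b : Fin n → ℝ) (Bt : Matrix (Fin n) (Fin n) ℝ)
    (P : Matrix (Fin n) (Fin n) ℝ) (hP : P.IsSymm) (p : Fin n → ℝ)
    (Ψ : Matrix (Fin m) (Fin m) ℝ) (hΨ : Ψ.PosDef) (x : Fin n → ℝ)
    (h𝒜 : (-(Δt • (Λᵀ * P * Λ) - (1 : Matrix (Fin d) (Fin d) ℝ))).PosDef)
    (hexp : (Ψ⁻¹ - (θ * Δt) •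
        (S * ((1 : Matrix (Fin d) (Fin d) ℝ)
              - θ • (Δt • (Λᵀ * P * Λ) - (1 : Matrix (Fin d) (Fin d) ℝ))⁻¹) * Sᵀ)).PosDef) :
    ∃ s : (Fin m → ℝ) × (Fin d → ℝ) × (Fin m → ℝ),
      (∀ (γ : Fin d → ℝ) (η : Fin m → ℝ),
          FFun θ Δt S A a Ξ Λ b Bt P p Ψ x s.1 γ η
            ≤ FFun θ Δt S A a Ξ Λ b Bt P p Ψ x s.1 s.2.1 s.2.2) ∧
      (∀ h : Fin m → ℝ,
          FFun θ Δt S A a Ξ Λ b Bt P p Ψ x s.1 s.2.1 s.2.2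
            ≤ FFun θ Δt S A a Ξ Λ b Bt P p Ψ x h s.2.1 s.2.2) ∧
      (∀ s' : (Fin m → ℝ) × (Fin d → ℝ) × (Fin m → ℝ),
          ((∀ (γ : Fin d → ℝ) (η : Fin m → ℝ),
              FFun θ Δt S A a Ξ Λ b Bt P p Ψ x s'.1 γ η
                ≤ FFun θ Δt S A a Ξ Λ b Bt P p Ψ x s'.1 s'.2.1 s'.2.2) ∧
           (∀ h : Fin m → ℝ,
              FFun θ Δt S A a Ξ Λ b Bt P p Ψ x s'.1 s'.2.1 s'.2.2
                ≤ FFun θ Δt S A a Ξ Λ b Bt P p Ψ x h s'.2.1 s'.2.2)) → s' = s) ∧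
      (⨅ h : Fin m → ℝ, ⨆ q : (Fin d → ℝ) × (Fin m → ℝ),
          FFun θ Δt S A a Ξ Λ b Bt P p Ψ x h q.1 q.2)
        = FFun θ Δt S A a Ξ Λ b Bt P p Ψ x s.1 s.2.1 s.2.2 ∧
      (⨆ q : (Fin d → ℝ) × (Fin m → ℝ), ⨅ h : Fin m → ℝ,
          FFun θ Δt S A a Ξ Λ b Bt P p Ψ x h q.1 q.2)
        = FFun θ Δt S A a Ξ Λ b Bt P p Ψ x s.1 s.2.1 s.2.2 :=
  F_saddle_point_and_minimax_general θ Δt hθ hΔt S hS A a Ξ Λ b Bt P p Ψ x h𝒜 hexp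
end

section
/- Fix θ > 0, Δt > 0, Σ ∈ ℝ^{m×d} with ΣΣᵀ positive definite, A ∈ ℝ^{m×n}, a ∈ ℝ^m, Ξ ∈ ℝ^d, Λ ∈ ℝ^{n×d}, b ∈ ℝ^n, B̃ ∈ ℝ^{n×n}, a symmetric matrix P ∈ ℝ^{n×n}, p ∈ ℝ^n, a symmetric positive definite Ψ ∈ ℝ^{m×m}, and x ∈ ℝ^n. Set 𝒜 := ΛᵀPΛΔt − I_d, assume 𝒜 is negative definite, and set ℬ := θΣᵀ(ΣΣᵀ)⁻¹Σ − 𝒜. Define F(h,γ,η) := (θ/2)(h+η)ᵀΣΣᵀ(h+η)Δt − θ(h+η)ᵀ(a+Ax)Δt − θ((h+η)ᵀΣ − Ξᵀ)γΔt + (1/2)γᵀ𝒜γΔt + γᵀΛᵀ(P(bΔt+B̃x)+p)Δt − (1/2)ηᵀΨ⁻¹η for h, η ∈ ℝ^m, γ ∈ ℝ^d. Then the unique point at which all three gradients of F (in h, in γ, and in η) vanish is (h*, γ*, η*) with η* = 0, γ* = ℬ⁻¹( −θΣᵀ(ΣΣᵀ)⁻¹(a+Ax) + ΛᵀP(bΔt+B̃x)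 + Λᵀp + θΞ ), and h* = (ΣΣᵀ)⁻¹[ (I_m − θΣℬ⁻¹Σᵀ(ΣΣᵀ)⁻¹)(a+Ax) + Σℬ⁻¹( ΛᵀP(bΔt+B̃x) + Λᵀp + θΞ ) ]. -/
open Matrix

/-- `ℬ = θΣᵀ(ΣΣᵀ)⁻¹Σ − 𝒜` with `𝒜 = ΛᵀPΛΔt − I_d`. -/
noncomputable def calB {m n d : ℕ} (θ Δt : ℝ) (S : Matrix (Fin m) (Fin d) ℝ)
    (Λ : Matrix (Fin n) (Fin d) ℝ) (P : Matrix (Fin n) (Fin n) ℝ) :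
    Matrix (Fin d) (Fin d) ℝ :=
  θ • (Sᵀ * (S * Sᵀ)⁻¹ * S) - (Δt • (Λᵀ * P * Λ) - 1)

/-!
`F` is quadratic in each of `h`, `γ`, `η` separately, so each partial derivative vanishes
exactly when an affine equation holds:
`ΣΣᵀ(h+η) = a+Ax+Σγ`, `𝒜γ + Λᵀ(P(bΔt+B̃x)+p) + θΞ = θΣᵀ(h+η)` and
`Ψ⁻¹η = θΔt(ΣΣᵀ(h+η) − (a+Ax+Σγ))`.
The first and third equations give `Ψ⁻¹η = 0`, hence `η = 0`. Substituting
`h = (ΣΣᵀ)⁻¹(a+Ax+Σγ)` into the second leaves `ℬγ = −θΣᵀ(ΣΣᵀ)⁻¹(a+Ax) + Λᵀ(P(bΔt+B̃x)+p) + θΞ`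
with the Schur complement `ℬ`, which is invertible as the sum of the positive semidefinite
`θΣᵀ(ΣΣᵀ)⁻¹Σ` and the positive definite `−𝒜`.
-/

section QuadraticForms

variable {ι : Type*} [Fintype ι]

theorem hasFDerivAt_of_quadratic_expansion {f : (ι → ℝ) → ℝ} {y g : ι → ℝ}
    (Q : Matrix ι ι ℝ) (hf : ∀ z, f (y + z) = f y + z ⬝ᵥ g + z ⬝ᵥ Q *ᵥ z) :
    HasFDerivAt f (LinearMap.toContinuousLinearMap (dotProductBilin ℝ ℝ g)) y := by
  have hlin : HasFDerivAt (fun x => g ⬝ᵥ x - g ⬝ᵥ y)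
      (LinearMap.toContinuousLinearMap (dotProductBilin ℝ ℝ g)) y :=
    (LinearMap.toContinuousLinearMap (dotProductBilin ℝ ℝ g)).hasFDerivAt.sub_const (g ⬝ᵥ y)
  have hquad : HasFDerivAt (fun x => (x - y) ⬝ᵥ Q *ᵥ (x - y)) (0 : (ι → ℝ) →L[ℝ] ℝ) y := by
    have hsub := (hasFDerivAt_id (𝕜 := ℝ) y).sub_const y
    have := (dotProductBilin ℝ ℝ : (ι → ℝ) →ₗ[ℝ] (ι → ℝ) →ₗ[ℝ] ℝ).compl₂ Q.mulVecLin
      |>.toContinuousBilinearMap.hasFDerivAt_of_bilinear hsub hsub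
    simpa using this
  have hf' : f = fun x => f y + ((g ⬝ᵥ x - g ⬝ᵥ y) + (x - y) ⬝ᵥ Q *ᵥ (x - y)) := by
    funext x
    simpa [dotProduct_sub, dotProduct_comm _ g, add_assoc] using hf (x - y)
  rw [hf']
  exact ((hlin.add hquad).const_add _).congr_fderiv (add_zero _)

theorem fderiv_eq_zero_iff_of_quadratic_expansion {f : (ι → ℝ) → ℝ} {y g : ι → ℝ}
    (Q : Matrix ι ι ℝ) (hf : ∀ z, f (y + z) = f y + z ⬝ᵥ g + z ⬝ᵥ Q *ᵥ z) :
    fderiv ℝ f y = 0 ↔ g = 0 := by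
  classical
  rw [(hasFDerivAt_of_quadratic_expansion Q hf).fderiv]
  refine ⟨fun hg => funext fun i => ?_, fun hg => by ext; simp [hg]⟩
  simpa using congr($hg (Pi.single i 1))

theorem Matrix.IsSymm.dotProduct_mulVec_comm {Q : Matrix ι ι ℝ} (hQ : Q.IsSymm) (u v : ι → ℝ) :
    u ⬝ᵥ Q *ᵥ v = v ⬝ᵥ Q *ᵥ u := by
  rw [dotProduct_mulVec, ← mulVec_transpose, hQ.eq, dotProduct_comm]

theorem Matrix.IsSymm.add_dotProduct_mulVec_add {Q : Matrix ι ι ℝ} (hQ : Q.IsSymm)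
    (y z : ι → ℝ) :
    (y + z) ⬝ᵥ Q *ᵥ (y + z) = y ⬝ᵥ Q *ᵥ y + 2 * (z ⬝ᵥ Q *ᵥ y) + z ⬝ᵥ Q *ᵥ z := by
  rw [mulVec_add, dotProduct_add, add_dotProduct, add_dotProduct, hQ.dotProduct_mulVec_comm y z]
  ring

theorem Matrix.transpose_mulVec_dotProduct {κ : Type*} [Fintype κ] (S : Matrix ι κ ℝ)
    (z : ι → ℝ) (γ : κ → ℝ) : (Sᵀ *ᵥ z) ⬝ᵥ γ = z ⬝ᵥ S *ᵥ γ := by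
  rw [mulVec_transpose, dotProduct_mulVec]

theorem Matrix.isSymm_mul_transpose {κ : Type*} (S : Matrix κ ι ℝ) :
    (S * Sᵀ).IsSymm := by
  simp [IsSymm, transpose_mul]

theorem Matrix.mulVec_eq_iff_eq_inv_mulVec {R : Type*} [CommRing R] [DecidableEq ι]
    {M : Matrix ι ι R} (hM : IsUnit M.det) {u v : ι → R} : M *ᵥ u = v ↔ u = M⁻¹ *ᵥ v := by
  constructor
  · rintro rfl
    rw [mulVec_mulVec, nonsing_inv_mul _ hM, one_mulVec]
  · rintro rfl
    rw [mulVec_mulVec, mul_nonsing_inv _ hM, one_mulVec]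

theorem Matrix.PosDef.smul_transpose_mul_inv_mul_sub {κ : Type*} [Fintype κ] [DecidableEq ι]
    {M : Matrix ι ι ℝ} (hM : M.PosDef) (S : Matrix ι κ ℝ) {θ : ℝ} (hθ : 0 ≤ θ)
    {K : Matrix κ κ ℝ} (hK : (-K).PosDef) : (θ • (Sᵀ * M⁻¹ * S) - K).PosDef := by
  rw [sub_eq_add_neg]
  refine PosDef.posSemidef_add (PosSemidef.smul ?_ hθ) hK
  simpa using hM.inv.posSemidef.conjTranspose_mul_mul_same S

theorem Matrix.blockSystem_iff_of_isUnit_schurComplement {R : Type*} [CommRing R] {κ : Type*}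
    [Fintype κ] [DecidableEq ι] [DecidableEq κ] {M : Matrix ι ι R} (hM : IsUnit M.det)
    (S : Matrix ι κ R) (K : Matrix κ κ R) (θ : R) (hB : IsUnit (θ • (Sᵀ * M⁻¹ * S) - K).det)
    (c : ι → R) (u : κ → R) (h : ι → R) (γ : κ → R) :
    (M *ᵥ h = c + S *ᵥ γ ∧ K *ᵥ γ + u = θ • (Sᵀ *ᵥ h)) ↔
      (h = M⁻¹ *ᵥ ((1 - θ • (S * (θ • (Sᵀ * M⁻¹ * S) - K)⁻¹ * Sᵀ * M⁻¹)) *ᵥ c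
          + (S * (θ • (Sᵀ * M⁻¹ * S) - K)⁻¹) *ᵥ u) ∧
        γ = (θ • (Sᵀ * M⁻¹ * S) - K)⁻¹ *ᵥ ((-θ) • (Sᵀ *ᵥ (M⁻¹ *ᵥ c)) + u)) := by
  set B := θ • (Sᵀ * M⁻¹ * S) - K
  have elim_h : K *ᵥ γ + u = θ • (Sᵀ *ᵥ (M⁻¹ *ᵥ (c + S *ᵥ γ))) ↔
      B *ᵥ γ = (-θ) • (Sᵀ *ᵥ (M⁻¹ *ᵥ c)) + u := by
    simp only [B, sub_mulVec, smul_mulVec, ← mulVec_mulVec, mulVec_add, smul_add]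
    constructor <;> intro e <;> linear_combination (norm := module) -e
  have back_substitution : M⁻¹ *ᵥ (c + S *ᵥ (B⁻¹ *ᵥ ((-θ) • (Sᵀ *ᵥ (M⁻¹ *ᵥ c)) + u))) =
      M⁻¹ *ᵥ ((1 - θ • (S * B⁻¹ * Sᵀ * M⁻¹)) *ᵥ c + (S * B⁻¹) *ᵥ u) := by
    simp only [sub_mulVec, smul_mulVec, one_mulVec, ← mulVec_mulVec, mulVec_add, mulVec_sub,
      mulVec_smul]
    module
  rw [mulVec_eq_iff_eq_inv_mulVec hM]
  constructor
  · rintro ⟨rfl, e⟩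
    obtain rfl := (mulVec_eq_iff_eq_inv_mulVec hB).1 (elim_h.1 e)
    exact ⟨back_substitution, rfl⟩
  · rintro ⟨rfl, rfl⟩
    rw [← back_substitution]
    exact ⟨rfl, elim_h.2 ((mulVec_eq_iff_eq_inv_mulVec hB).2 rfl)⟩

end QuadraticForms

section Hamiltonian

variable {m n d : ℕ} (θ Δt : ℝ) (S : Matrix (Fin m) (Fin d) ℝ)
    (A : Matrix (Fin m) (Fin n) ℝ) (a : Fin m → ℝ) (Ξ : Fin d → ℝ)
    (Λ : Matrix (Fin n) (Fin d) ℝ) (b : Fin n → ℝ) (Bt : Matrix (Fin n) (Fin n) ℝ)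
    (P : Matrix (Fin n) (Fin n) ℝ) (p : Fin n → ℝ) (Ψ : Matrix (Fin m) (Fin m) ℝ)
    (x : Fin n → ℝ) (h : Fin m → ℝ) (γ : Fin d → ℝ) (η : Fin m → ℝ)

theorem FFun_add_h (z : Fin m → ℝ) :
    FFun θ Δt S A a Ξ Λ b Bt P p Ψ x (h + z) γ η = FFun θ Δt S A a Ξ Λ b Bt P p Ψ x h γ η
      + z ⬝ᵥ (θ * Δt) • ((S * Sᵀ) *ᵥ (h + η) - (a + A *ᵥ x + S *ᵥ γ))
      + z ⬝ᵥ ((θ * Δt / 2) • (S * Sᵀ)) *ᵥ z := by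
  simp only [FFun]
  rw [add_right_comm h z η, (isSymm_mul_transpose S).add_dotProduct_mulVec_add]
  simp only [mulVec_add, add_dotProduct, dotProduct_add, sub_dotProduct, dotProduct_sub,
    dotProduct_smul, smul_mulVec, smul_eq_mul, transpose_mulVec_dotProduct]
  ring

theorem FFun_add_γ (hP : P.IsSymm) (z : Fin d → ℝ) :
    FFun θ Δt S A a Ξ Λ b Bt P p Ψ x h (γ + z) η = FFun θ Δt S A a Ξ Λ b Bt P p Ψ x h γ η
      + z ⬝ᵥ Δt • ((Δt • (Λᵀ * P * Λ) - 1) *ᵥ γ + Λᵀ *ᵥ (P *ᵥ (Δt • b + Bt *ᵥ x) + p)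
          - θ • (Sᵀ *ᵥ (h + η) - Ξ))
      + z ⬝ᵥ ((Δt / 2) • (Δt • (Λᵀ * P * Λ) - 1)) *ᵥ z := by
  have hK : (Δt • (Λᵀ * P * Λ) - 1).IsSymm := by
    simp [IsSymm, transpose_mul, hP.eq, Matrix.mul_assoc]
  simp only [FFun]
  rw [hK.add_dotProduct_mulVec_add]
  simp only [add_dotProduct, dotProduct_add, dotProduct_sub, dotProduct_smul, smul_mulVec,
    smul_eq_mul]
  simp only [dotProduct_comm _ z, dotProduct_sub]
  ring

theorem FFun_add_η (hΨ : Ψ.IsSymm) (z : Fin m → ℝ) :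
    FFun θ Δt S A a Ξ Λ b Bt P p Ψ x h γ (η + z) = FFun θ Δt S A a Ξ Λ b Bt P p Ψ x h γ η
      + z ⬝ᵥ ((θ * Δt) • ((S * Sᵀ) *ᵥ (h + η) - (a + A *ᵥ x + S *ᵥ γ)) - Ψ⁻¹ *ᵥ η)
      + z ⬝ᵥ ((θ * Δt / 2) • (S * Sᵀ) - (1 / 2 : ℝ) • Ψ⁻¹) *ᵥ z := by
  simp only [FFun]
  rw [← add_assoc h η z, (isSymm_mul_transpose S).add_dotProduct_mulVec_add,
    hΨ.inv.add_dotProduct_mulVec_add]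
  simp only [mulVec_add, add_dotProduct, dotProduct_add, sub_dotProduct, dotProduct_sub,
    dotProduct_smul, smul_mulVec, sub_mulVec, smul_eq_mul, transpose_mulVec_dotProduct]
  ring

theorem fderiv_FFun_h_eq_zero_iff (hθ : θ ≠ 0) (hΔt : Δt ≠ 0) :
    fderiv ℝ (fun h' => FFun θ Δt S A a Ξ Λ b Bt P p Ψ x h' γ η) h = 0 ↔
      (S * Sᵀ) *ᵥ (h + η) = a + A *ᵥ x + S *ᵥ γ := by
  rw [fderiv_eq_zero_iff_of_quadratic_expansion _ (FFun_add_h θ Δt S A a Ξ Λ b Bt P p Ψ x h γ η),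
    smul_eq_zero, sub_eq_zero]
  simp [hθ, hΔt]

theorem fderiv_FFun_γ_eq_zero_iff (hΔt : Δt ≠ 0) (hP : P.IsSymm) :
    fderiv ℝ (fun γ' => FFun θ Δt S A a Ξ Λ b Bt P p Ψ x h γ' η) γ = 0 ↔
      (Δt • (Λᵀ * P * Λ) - 1) *ᵥ γ + (Λᵀ *ᵥ (P *ᵥ (Δt • b + Bt *ᵥ x)) + Λᵀ *ᵥ p + θ • Ξ)
        = θ • (Sᵀ *ᵥ (h + η)) := by
  rw [fderiv_eq_zero_iff_of_quadratic_expansion _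
    (FFun_add_γ θ Δt S A a Ξ Λ b Bt P p Ψ x h γ η hP), smul_eq_zero, or_iff_right hΔt]
  rw [mulVec_add]
  constructor <;> intro e <;> linear_combination (norm := module) e

theorem fderiv_FFun_η_eq_zero_iff (hΨ : Ψ.IsSymm) :
    fderiv ℝ (fun η' => FFun θ Δt S A a Ξ Λ b Bt P p Ψ x h γ η') η = 0 ↔
      Ψ⁻¹ *ᵥ η = (θ * Δt) • ((S * Sᵀ) *ᵥ (h + η) - (a + A *ᵥ x + S *ᵥ γ)) := by
  rw [fderiv_eq_zero_iff_of_quadratic_expansion _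
    (FFun_add_η θ Δt S A a Ξ Λ b Bt P p Ψ x h γ η hΨ), sub_eq_zero, eq_comm]

theorem fderiv_FFun_eq_zero_iff (hθ : θ ≠ 0) (hΔt : Δt ≠ 0) (hP : P.IsSymm) (hΨ : Ψ.PosDef) :
    (fderiv ℝ (fun h' => FFun θ Δt S A a Ξ Λ b Bt P p Ψ x h' γ η) h = 0 ∧
      fderiv ℝ (fun γ' => FFun θ Δt S A a Ξ Λ b Bt P p Ψ x h γ' η) γ = 0 ∧
      fderiv ℝ (fun η' => FFun θ Δt S A a Ξ Λ b Bt P p Ψ x h γ η') η = 0) ↔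
    ((S * Sᵀ) *ᵥ h = a + A *ᵥ x + S *ᵥ γ ∧
      (Δt • (Λᵀ * P * Λ) - 1) *ᵥ γ + (Λᵀ *ᵥ (P *ᵥ (Δt • b + Bt *ᵥ x)) + Λᵀ *ᵥ p + θ • Ξ)
        = θ • (Sᵀ *ᵥ h)) ∧ η = 0 := by
  have hΨsymm : Ψ.IsSymm := isHermitian_iff_isSymm.1 hΨ.isHermitian
  have hΨinv : IsUnit Ψ⁻¹.det := (isUnit_iff_isUnit_det _).1 hΨ.inv.isUnit
  rw [fderiv_FFun_h_eq_zero_iff θ Δt S A a Ξ Λ b Bt P p Ψ x h γ η hθ hΔt,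
    fderiv_FFun_γ_eq_zero_iff θ Δt S A a Ξ Λ b Bt P p Ψ x h γ η hΔt hP,
    fderiv_FFun_η_eq_zero_iff θ Δt S A a Ξ Λ b Bt P p Ψ x h γ η hΨsymm]
  constructor
  · rintro ⟨h_eq, γ_eq, η_eq⟩
    rw [h_eq, sub_self, smul_zero, mulVec_eq_iff_eq_inv_mulVec hΨinv, mulVec_zero] at η_eq
    subst η_eq
    rw [add_zero] at h_eq γ_eq
    exact ⟨⟨h_eq, γ_eq⟩, rfl⟩
  · rintro ⟨⟨h_eq, γ_eq⟩, rfl⟩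
    rw [add_zero, h_eq, sub_self, smul_zero, mulVec_zero]
    exact ⟨rfl, γ_eq, rfl⟩

end Hamiltonian

/-- The unique stationary point of `F` (all three gradients vanish) is `(h*, γ*, 0)`,
with the explicit formulas of Proposition 4 (Controls). -/
theorem F_unique_stationary_point {m n d : ℕ} (θ Δt : ℝ) (hθ : 0 < θ) (hΔt : 0 < Δt)
    (S : Matrix (Fin m) (Fin d) ℝ) (hS : (S * Sᵀ).PosDef)
    (A : Matrix (Fin m) (Fin n) ℝ) (a : Fin m → ℝ) (Ξ : Fin d → ℝ)
    (Λ : Matrix (Fin n) (Fin d) ℝ) (b : Fin n → ℝ) (Bt : Matrix (Fin n) (Fin n) ℝ)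
    (P : Matrix (Fin n) (Fin n) ℝ) (hP : P.IsSymm) (p : Fin n → ℝ)
    (Ψ : Matrix (Fin m) (Fin m) ℝ) (hΨ : Ψ.PosDef) (x : Fin n → ℝ)
    (h𝒜 : (-(Δt • (Λᵀ * P * Λ) - (1 : Matrix (Fin d) (Fin d) ℝ))).PosDef) :
    ∀ (h : Fin m → ℝ) (γ : Fin d → ℝ) (η : Fin m → ℝ),
      (fderiv ℝ (fun h' => FFun θ Δt S A a Ξ Λ b Bt P p Ψ x h' γ η) h = 0 ∧
       fderiv ℝ (fun γ' => FFun θ Δt S A a Ξ Λ b Bt P p Ψ x h γ' η) γ = 0 ∧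
       fderiv ℝ (fun η' => FFun θ Δt S A a Ξ Λ b Bt P p Ψ x h γ η') η = 0)
      ↔ (h = (S * Sᵀ)⁻¹ *ᵥ
            (((1 : Matrix (Fin m) (Fin m) ℝ)
                - θ • (S * (calB θ Δt S Λ P)⁻¹ * Sᵀ * (S * Sᵀ)⁻¹)) *ᵥ (a + A *ᵥ x)
              + (S * (calB θ Δt S Λ P)⁻¹) *ᵥ
                  (Λᵀ *ᵥ (P *ᵥ (Δt • b + Bt *ᵥ x)) + Λᵀ *ᵥ p + θ • Ξ)) ∧
         γ = (calB θ Δt S Λ P)⁻¹ *ᵥ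
              ((-θ) • (Sᵀ *ᵥ ((S * Sᵀ)⁻¹ *ᵥ (a + A *ᵥ x)))
                + Λᵀ *ᵥ (P *ᵥ (Δt • b + Bt *ᵥ x)) + Λᵀ *ᵥ p + θ • Ξ) ∧
         η = 0) := by
  intro h γ η
  have hM : IsUnit (S * Sᵀ).det := (isUnit_iff_isUnit_det _).1 hS.isUnit
  have hB : IsUnit (calB θ Δt S Λ P).det :=
    (isUnit_iff_isUnit_det _).1 (hS.smul_transpose_mul_inv_mul_sub S hθ.le h𝒜).isUnit
  rw [fderiv_FFun_eq_zero_iff θ Δt S A a Ξ Λ b Bt P p Ψ x h γ η hθ.ne' hΔt.ne' hP hΨ,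
    blockSystem_iff_of_isUnit_schurComplement hM S _ θ hB, and_assoc]
  simp only [calB, add_assoc]
end

section
/- Fix θ > 0, Δt > 0, Σ ∈ ℝ^{m×d} with ΣΣᵀ positive definite, A ∈ ℝ^{m×n}, a ∈ ℝ^m, Ξ ∈ ℝ^d, Λ ∈ ℝ^{n×d}, b ∈ ℝ^n, B̃ ∈ ℝ^{n×n}, a symmetric matrix P ∈ ℝ^{n×n}, p ∈ ℝ^n, a symmetric positive definite Ψ ∈ ℝ^{m×m}, and x ∈ ℝ^n. Set 𝒜 := ΛᵀPΛΔt − I_d, assume 𝒜 is negative definite, set ℬ := θΣᵀ(ΣΣᵀ)⁻¹Σ − 𝒜, define F(h,γ,η) := (θ/2)(h+η)ᵀΣΣᵀ(h+η)Δt − θ(h+η)ᵀ(a+Ax)Δt − θ((h+η)ᵀΣ − Ξᵀ)γΔt + (1/2)γᵀ𝒜γΔt + γᵀΛᵀ(P(bΔt+B̃x)+p)Δt − (1/2)ηᵀΨ⁻¹η, and let (h*, γ*, 0) be its unique stationary point, with γ* = ℬ⁻¹(−θΣᵀ(ΣΣᵀ)⁻¹(a+Ax) + ΛᵀP(bΔt+B̃x)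 + Λᵀp + θΞ) and h* = (ΣΣᵀ)⁻¹[(I_m − θΣℬ⁻¹Σᵀ(ΣΣᵀ)⁻¹)(a+Ax) + Σℬ⁻¹(ΛᵀP(bΔt+B̃x) + Λᵀp + θΞ)]. Then F(h*, γ*, 0) = (1/2)xᵀ𝔔x + xᵀ𝔮 + 𝔩, where 𝔔 := −θAᵀ(ΣΣᵀ)⁻¹AΔt + θ²Aᵀ(ΣΣᵀ)⁻¹Σℬ⁻¹Σᵀ(ΣΣᵀ)⁻¹AΔt − 2θAᵀ(ΣΣᵀ)⁻¹Σℬ⁻¹ΛᵀPB̃Δt + B̃ᵀPΛℬ⁻¹ΛᵀPB̃Δt, 𝔮 := −θAᵀ(ΣΣᵀ)⁻¹aΔt + (−θAᵀ(ΣΣᵀ)⁻¹Σ + B̃ᵀPΛ)·ℬ⁻¹·(−θΣᵀ(ΣΣᵀ)⁻¹a + Λᵀ(PbΔt + p) + θΞ)·Δt, and 𝔩 := −(θ/2)aᵀ(ΣΣᵀ)⁻¹aΔt + (1/2)(−θaᵀ(ΣΣᵀ)⁻¹Σ + bᵀPΛΔt + pᵀΛ + θΞᵀ)·ℬ⁻¹·(−θΣᵀ(ΣΣᵀ)⁻¹a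 + ΛᵀPbΔt + Λᵀp + θΞ)·Δt. -/
/-! Complete the square twice. At `h = (ΣΣᵀ)⁻¹u` with `u = c + Σγ`, `c = a + Ax`, the `h`-part
`θ((1/2)hᵀΣΣᵀh − hᵀu)` of `F` equals `−(θ/2)uᵀ(ΣΣᵀ)⁻¹u`, and `h*` has this form with `γ = γ*`.
Expanding `u` and writing `𝒜 = θΣᵀ(ΣΣᵀ)⁻¹Σ − ℬ` leaves `−(θ/2)cᵀ(ΣΣᵀ)⁻¹c + γᵀv − (1/2)γᵀℬγ`,
which at `γ* = ℬ⁻¹v` is `−(θ/2)cᵀ(ΣΣᵀ)⁻¹c + (1/2)vᵀℬ⁻¹v`. Both `c` and `v` are affine in `x`;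
expanding the two quadratic forms yields `𝔔`, `𝔮` and `𝔩`, where the two mixed terms of
`vᵀℬ⁻¹v` agree as quadratic forms (by symmetry of `(ΣΣᵀ)⁻¹`, `ℬ⁻¹` and `P`) and merge into
the single term of `𝔔` with factor `2`. -/

open Matrix

section QuadraticForm

variable {ι κ R : Type*} [Fintype ι] [Fintype κ] [CommRing R]

lemma dotProduct_mulVec_comm_of_isSymm {Q : Matrix ι ι R} (hQ : Q.IsSymm) (u v : ι → R) :
    u ⬝ᵥ (Q *ᵥ v) = v ⬝ᵥ (Q *ᵥ u) := by
  rw [dotProduct_mulVec, ← mulVec_transpose, hQ.eq, dotProduct_comm]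

lemma dotProduct_transpose_mulVec_self (N : Matrix ι ι R) (x : ι → R) :
    x ⬝ᵥ (Nᵀ *ᵥ x) = x ⬝ᵥ (N *ᵥ x) := by
  rw [mulVec_transpose, dotProduct_comm, ← dotProduct_mulVec]

lemma add_mulVec_dotProduct_mulVec_add_mulVec {Q : Matrix ι ι R} (hQ : Q.IsSymm) (v₀ : ι → R)
    (K : Matrix ι κ R) (x : κ → R) :
    (v₀ + K *ᵥ x) ⬝ᵥ (Q *ᵥ (v₀ + K *ᵥ x)) =
      v₀ ⬝ᵥ (Q *ᵥ v₀) + 2 * (x ⬝ᵥ (Kᵀ *ᵥ (Q *ᵥ v₀))) + x ⬝ᵥ ((Kᵀ * Q * K) *ᵥ x) := by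
  have hcross : (K *ᵥ x) ⬝ᵥ (Q *ᵥ v₀) = x ⬝ᵥ (Kᵀ *ᵥ (Q *ᵥ v₀)) := by
    rw [dotProduct_comm, dotProduct_mulVec, ← mulVec_transpose, dotProduct_comm]
  have hquad : (K *ᵥ x) ⬝ᵥ (Q *ᵥ (K *ᵥ x)) = x ⬝ᵥ ((Kᵀ * Q * K) *ᵥ x) := by
    rw [← mulVec_mulVec, ← mulVec_mulVec, dotProduct_comm, dotProduct_mulVec, ← mulVec_transpose,
      dotProduct_comm]
  rw [mulVec_add, add_dotProduct, dotProduct_add, dotProduct_add,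
    dotProduct_mulVec_comm_of_isSymm hQ v₀ (K *ᵥ x), hcross, hquad]
  ring

lemma isSymm_inv_mul_transpose_self [DecidableEq ι] (S : Matrix ι κ R) : ((S * Sᵀ)⁻¹).IsSymm := by
  refine IsSymm.inv ?_
  rw [IsSymm, transpose_mul, transpose_transpose]

lemma inv_mulVec_dotProduct_mulVec_inv_mulVec [DecidableEq ι] {Q : Matrix ι ι R}
    (hQ : IsUnit Q.det) (v : ι → R) :
    (Q⁻¹ *ᵥ v) ⬝ᵥ (Q *ᵥ (Q⁻¹ *ᵥ v)) = v ⬝ᵥ (Q⁻¹ *ᵥ v) := by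
  rw [mulVec_mulVec, mul_nonsing_inv _ hQ, one_mulVec, dotProduct_comm]

lemma dotProduct_transpose_mul_mul_mulVec_smul_add {Q : Matrix ι ι R} (hQ : Q.IsSymm)
    (c : R) (X Y : Matrix ι κ R) (x : κ → R) :
    x ⬝ᵥ (((c • X + Y)ᵀ * Q * (c • X + Y)) *ᵥ x) =
      c ^ 2 * (x ⬝ᵥ ((Xᵀ * Q * X) *ᵥ x)) + 2 * c * (x ⬝ᵥ ((Xᵀ * Q * Y) *ᵥ x))
        + x ⬝ᵥ ((Yᵀ * Q * Y) *ᵥ x) := by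
  have hflip : x ⬝ᵥ ((Yᵀ * Q * X) *ᵥ x) = x ⬝ᵥ ((Xᵀ * Q * Y) *ᵥ x) := by
    rw [← dotProduct_transpose_mulVec_self, transpose_mul, transpose_mul, hQ.eq,
      transpose_transpose, Matrix.mul_assoc]
  simp only [transpose_add, transpose_smul, Matrix.add_mul, Matrix.mul_add, Matrix.smul_mul,
    Matrix.mul_smul, add_mulVec, smul_mulVec, dotProduct_add, dotProduct_smul, smul_eq_mul, hflip]
  ring

end QuadraticForm

section Saddle

variable {m n d : ℕ} {θ Δt : ℝ} {S : Matrix (Fin m) (Fin d) ℝ} {A : Matrix (Fin m) (Fin n) ℝ}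
  {a : Fin m → ℝ} {Ξ : Fin d → ℝ} {Λ : Matrix (Fin n) (Fin d) ℝ} {b : Fin n → ℝ}
  {Bt P : Matrix (Fin n) (Fin n) ℝ} {p : Fin n → ℝ} {Ψ : Matrix (Fin m) (Fin m) ℝ}
  {x : Fin n → ℝ}

lemma calB_posDef (hθ : 0 < θ) (hS : (S * Sᵀ).PosDef)
    (h𝒜 : (-(Δt • (Λᵀ * P * Λ) - (1 : Matrix (Fin d) (Fin d) ℝ))).PosDef) :
    (calB θ Δt S Λ P).PosDef := by
  have hSMS : (θ • (Sᵀ * (S * Sᵀ)⁻¹ * S)).PosSemidef := by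
    simpa only [conjTranspose_eq_transpose_of_trivial] using
      (hS.posSemidef.inv.conjTranspose_mul_mul_same S).smul hθ.le
  rw [calB, sub_eq_add_neg]
  exact PosDef.posSemidef_add hSMS h𝒜

lemma FFun_inv_mulVec_zero (hS : IsUnit (S * Sᵀ).det) (γ : Fin d → ℝ) :
    FFun θ Δt S A a Ξ Λ b Bt P p Ψ x ((S * Sᵀ)⁻¹ *ᵥ (a + A *ᵥ x + S *ᵥ γ)) γ 0 =
      Δt * (-(θ / 2) * ((a + A *ᵥ x + S *ᵥ γ) ⬝ᵥ ((S * Sᵀ)⁻¹ *ᵥ (a + A *ᵥ x + S *ᵥ γ)))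
        + θ * (Ξ ⬝ᵥ γ) + 1 / 2 * (γ ⬝ᵥ ((Δt • (Λᵀ * P * Λ) - 1) *ᵥ γ))
        + γ ⬝ᵥ (Λᵀ *ᵥ (P *ᵥ (Δt • b + Bt *ᵥ x) + p))) := by
  set u := a + A *ᵥ x + S *ᵥ γ
  have hquad := inv_mulVec_dotProduct_mulVec_inv_mulVec hS u
  have hlin : ((S * Sᵀ)⁻¹ *ᵥ u) ⬝ᵥ (a + A *ᵥ x) + (Sᵀ *ᵥ ((S * Sᵀ)⁻¹ *ᵥ u)) ⬝ᵥ γ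
      = u ⬝ᵥ ((S * Sᵀ)⁻¹ *ᵥ u) := by
    rw [mulVec_transpose, ← dotProduct_mulVec, ← dotProduct_add, dotProduct_comm]
  simp only [FFun, add_zero, mulVec_zero, dotProduct_zero, sub_zero, mul_zero, sub_dotProduct]
  rw [hquad, ← hlin]
  ring

lemma FFun_at_saddle (hS : IsUnit (S * Sᵀ).det) (hB : IsUnit (calB θ Δt S Λ P).det)
    (v : Fin d → ℝ) (hv : v = (-θ) • (Sᵀ *ᵥ ((S * Sᵀ)⁻¹ *ᵥ (a + A *ᵥ x)))
      + Λᵀ *ᵥ (P *ᵥ (Δt • b + Bt *ᵥ x)) + Λᵀ *ᵥ p + θ • Ξ) :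
    FFun θ Δt S A a Ξ Λ b Bt P p Ψ x
        ((S * Sᵀ)⁻¹ *ᵥ (a + A *ᵥ x + S *ᵥ ((calB θ Δt S Λ P)⁻¹ *ᵥ v)))
        ((calB θ Δt S Λ P)⁻¹ *ᵥ v) 0 =
      Δt * (-(θ / 2) * ((a + A *ᵥ x) ⬝ᵥ ((S * Sᵀ)⁻¹ *ᵥ (a + A *ᵥ x)))
        + 1 / 2 * (v ⬝ᵥ ((calB θ Δt S Λ P)⁻¹ *ᵥ v))) := by
  have h𝒜 : Δt • (Λᵀ * P * Λ) - 1 = θ • (Sᵀ * (S * Sᵀ)⁻¹ * S) - calB θ Δt S Λ P := by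
    rw [calB, sub_sub_cancel]
  rw [FFun_inv_mulVec_zero hS,
    add_mulVec_dotProduct_mulVec_add_mulVec (isSymm_inv_mul_transpose_self S), h𝒜, sub_mulVec,
    dotProduct_sub, smul_mulVec, dotProduct_smul, inv_mulVec_dotProduct_mulVec_inv_mulVec hB]
  have hγv : ∀ γ : Fin d → ℝ, γ ⬝ᵥ v = -θ * (γ ⬝ᵥ (Sᵀ *ᵥ ((S * Sᵀ)⁻¹ *ᵥ (a + A *ᵥ x))))
      + θ * (Ξ ⬝ᵥ γ) + γ ⬝ᵥ (Λᵀ *ᵥ (P *ᵥ (Δt • b + Bt *ᵥ x) + p)) := by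
    intro γ
    simp only [hv, mulVec_add, dotProduct_add, dotProduct_smul, smul_eq_mul, dotProduct_comm Ξ]
    ring
  rw [dotProduct_comm v, hγv, smul_eq_mul]
  ring

lemma saddle_value_eq_quadratic {M : Matrix (Fin m) (Fin m) ℝ} (hM : M.IsSymm)
    {Bi : Matrix (Fin d) (Fin d) ℝ} (hBi : Bi.IsSymm) (hP : P.IsSymm) :
    Δt * (-(θ / 2) * ((a + A *ᵥ x) ⬝ᵥ (M *ᵥ (a + A *ᵥ x)))
      + 1 / 2 * (((-θ) • (Sᵀ *ᵥ (M *ᵥ (a + A *ᵥ x))) + Λᵀ *ᵥ (P *ᵥ (Δt • b + Bt *ᵥ x))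
          + Λᵀ *ᵥ p + θ • Ξ) ⬝ᵥ (Bi *ᵥ ((-θ) • (Sᵀ *ᵥ (M *ᵥ (a + A *ᵥ x)))
          + Λᵀ *ᵥ (P *ᵥ (Δt • b + Bt *ᵥ x)) + Λᵀ *ᵥ p + θ • Ξ)))) =
    (1 / 2 : ℝ) * (x ⬝ᵥ
        (((-(θ * Δt)) • (Aᵀ * M * A)
          + (θ ^ 2 * Δt) • (Aᵀ * M * S * Bi * Sᵀ * M * A)
          - (2 * θ * Δt) • (Aᵀ * M * S * Bi * Λᵀ * P * Bt)
          + Δt • (Btᵀ * P * Λ * Bi * Λᵀ * P * Bt)) *ᵥ x))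
      + x ⬝ᵥ
        ((-(θ * Δt)) • (Aᵀ *ᵥ (M *ᵥ a))
          + Δt • ((((-θ) • (Aᵀ * M * S)) + Btᵀ * P * Λ) *ᵥ
              (Bi *ᵥ ((-θ) • (Sᵀ *ᵥ (M *ᵥ a)) + Λᵀ *ᵥ (Δt • (P *ᵥ b) + p) + θ • Ξ))))
      + ((-(θ / 2)) * (a ⬝ᵥ (M *ᵥ a)) * Δt
          + (1 / 2 : ℝ) *
            (((-θ) • (a ᵥ* (M * S)) + Δt • (b ᵥ* (P * Λ)) + (p ᵥ* Λ) + θ • Ξ) ⬝ᵥ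
              (Bi *ᵥ ((-θ) • (Sᵀ *ᵥ (M *ᵥ a)) + Δt • (Λᵀ *ᵥ (P *ᵥ b)) + Λᵀ *ᵥ p + θ • Ξ)))
            * Δt) := by
  set v₀ := (-θ) • (Sᵀ *ᵥ (M *ᵥ a)) + Δt • (Λᵀ *ᵥ (P *ᵥ b)) + Λᵀ *ᵥ p + θ • Ξ
  have hv : (-θ) • (Sᵀ *ᵥ (M *ᵥ (a + A *ᵥ x))) + Λᵀ *ᵥ (P *ᵥ (Δt • b + Bt *ᵥ x))
      + Λᵀ *ᵥ p + θ • Ξ = v₀ + ((-θ) • (Sᵀ * M * A) + Λᵀ * P * Bt) *ᵥ x := by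
    simp only [v₀, mulVec_add, add_mulVec, smul_mulVec, mulVec_smul, ← mulVec_mulVec]
    module
  have hv₀ : (-θ) • (Sᵀ *ᵥ (M *ᵥ a)) + Λᵀ *ᵥ (Δt • (P *ᵥ b) + p) + θ • Ξ = v₀ := by
    simp only [v₀, mulVec_add, mulVec_smul]
    abel
  have hrow : (-θ) • (a ᵥ* (M * S)) + Δt • (b ᵥ* (P * Λ)) + (p ᵥ* Λ) + θ • Ξ = v₀ := by
    simp only [v₀, ← mulVec_transpose, transpose_mul, hM.eq, hP.eq, mulVec_mulVec]
  have hK : ((-θ) • (Sᵀ * M * A) + Λᵀ * P * Bt)ᵀ = (-θ) • (Aᵀ * M * S) + Btᵀ * P * Λ := by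
    simp only [transpose_add, transpose_smul, transpose_mul, transpose_transpose, hM.eq, hP.eq,
      Matrix.mul_assoc]
  rw [hv, add_mulVec_dotProduct_mulVec_add_mulVec hBi, add_mulVec_dotProduct_mulVec_add_mulVec hM,
    dotProduct_transpose_mul_mul_mulVec_smul_add hBi, hK, hv₀, hrow]
  simp only [transpose_mul, transpose_transpose, hM.eq, hP.eq, Matrix.mul_assoc, add_mulVec,
    sub_mulVec, smul_mulVec, dotProduct_add, dotProduct_sub, dotProduct_smul, smul_eq_mul]
  ring

end Saddle

theorem F_at_saddle_quadratic_representation_general {m n d : ℕ} (θ Δt : ℝ) (hθ : 0 < θ)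
    (S : Matrix (Fin m) (Fin d) ℝ) (hS : (S * Sᵀ).PosDef)
    (A : Matrix (Fin m) (Fin n) ℝ) (a : Fin m → ℝ) (Ξ : Fin d → ℝ)
    (Λ : Matrix (Fin n) (Fin d) ℝ) (b : Fin n → ℝ) (Bt : Matrix (Fin n) (Fin n) ℝ)
    (P : Matrix (Fin n) (Fin n) ℝ) (hP : P.IsSymm) (p : Fin n → ℝ)
    (Ψ : Matrix (Fin m) (Fin m) ℝ) (x : Fin n → ℝ)
    (h𝒜 : (-(Δt • (Λᵀ * P * Λ) - (1 : Matrix (Fin d) (Fin d) ℝ))).PosDef) :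
    FFun θ Δt S A a Ξ Λ b Bt P p Ψ x
      -- h*
      ((S * Sᵀ)⁻¹ *ᵥ
        (((1 : Matrix (Fin m) (Fin m) ℝ)
            - θ • (S * (calB θ Δt S Λ P)⁻¹ * Sᵀ * (S * Sᵀ)⁻¹)) *ᵥ (a + A *ᵥ x)
          + (S * (calB θ Δt S Λ P)⁻¹) *ᵥ
              (Λᵀ *ᵥ (P *ᵥ (Δt • b + Bt *ᵥ x)) + Λᵀ *ᵥ p + θ • Ξ)))
      -- γ*
      ((calB θ Δt S Λ P)⁻¹ *ᵥ
        ((-θ) • (Sᵀ *ᵥ ((S * Sᵀ)⁻¹ *ᵥ (a + A *ᵥ x)))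
          + Λᵀ *ᵥ (P *ᵥ (Δt • b + Bt *ᵥ x)) + Λᵀ *ᵥ p + θ • Ξ))
      -- η* = 0
      0
    = (1 / 2 : ℝ) * (x ⬝ᵥ
        (((-(θ * Δt)) • (Aᵀ * (S * Sᵀ)⁻¹ * A)
          + (θ ^ 2 * Δt) •
              (Aᵀ * (S * Sᵀ)⁻¹ * S * (calB θ Δt S Λ P)⁻¹ * Sᵀ * (S * Sᵀ)⁻¹ * A)
          - (2 * θ * Δt) •
              (Aᵀ * (S * Sᵀ)⁻¹ * S * (calB θ Δt S Λ P)⁻¹ * Λᵀ * P * Bt)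
          + Δt • (Btᵀ * P * Λ * (calB θ Δt S Λ P)⁻¹ * Λᵀ * P * Bt)) *ᵥ x))
      + x ⬝ᵥ
        ((-(θ * Δt)) • (Aᵀ *ᵥ ((S * Sᵀ)⁻¹ *ᵥ a))
          + Δt • ((((-θ) • (Aᵀ * (S * Sᵀ)⁻¹ * S)) + Btᵀ * P * Λ) *ᵥ
              ((calB θ Δt S Λ P)⁻¹ *ᵥ
                ((-θ) • (Sᵀ *ᵥ ((S * Sᵀ)⁻¹ *ᵥ a))
                  + Λᵀ *ᵥ (Δt • (P *ᵥ b) + p) + θ • Ξ))))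
      + ((-(θ / 2)) * (a ⬝ᵥ ((S * Sᵀ)⁻¹ *ᵥ a)) * Δt
          + (1 / 2 : ℝ) *
            (((-θ) • (a ᵥ* ((S * Sᵀ)⁻¹ * S)) + Δt • (b ᵥ* (P * Λ)) + (p ᵥ* Λ) + θ • Ξ) ⬝ᵥ
              ((calB θ Δt S Λ P)⁻¹ *ᵥ
                ((-θ) • (Sᵀ *ᵥ ((S * Sᵀ)⁻¹ *ᵥ a))
                  + Δt • (Λᵀ *ᵥ (P *ᵥ b)) + Λᵀ *ᵥ p + θ • Ξ))) * Δt) := by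
  have hG : IsUnit (S * Sᵀ).det := (isUnit_iff_isUnit_det _).1 hS.isUnit
  have hB := calB_posDef hθ hS h𝒜
  have hstar : ((1 : Matrix (Fin m) (Fin m) ℝ)
        - θ • (S * (calB θ Δt S Λ P)⁻¹ * Sᵀ * (S * Sᵀ)⁻¹)) *ᵥ (a + A *ᵥ x)
      + (S * (calB θ Δt S Λ P)⁻¹) *ᵥ (Λᵀ *ᵥ (P *ᵥ (Δt • b + Bt *ᵥ x)) + Λᵀ *ᵥ p + θ • Ξ)
      = a + A *ᵥ x + S *ᵥ ((calB θ Δt S Λ P)⁻¹ *ᵥ ((-θ) • (Sᵀ *ᵥ ((S * Sᵀ)⁻¹ *ᵥ (a + A *ᵥ x)))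
          + Λᵀ *ᵥ (P *ᵥ (Δt • b + Bt *ᵥ x)) + Λᵀ *ᵥ p + θ • Ξ)) := by
    simp only [sub_mulVec, smul_mulVec, one_mulVec, ← mulVec_mulVec, mulVec_add, mulVec_smul]
    module
  rw [hstar, FFun_at_saddle hG ((isUnit_iff_isUnit_det _).1 hB.isUnit) _ rfl]
  exact saddle_value_eq_quadratic (isSymm_inv_mul_transpose_self S)
    (isHermitian_iff_isSymm.1 hB.isHermitian).inv hP

/-- At its saddle point `(h*, γ*, 0)`, the quadratic function `F` has the explicit
quadratic representation `F(h*,γ*,0) = (1/2)xᵀ𝔔x + xᵀ𝔮 + 𝔩`. -/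
theorem F_at_saddle_quadratic_representation {m n d : ℕ} (θ Δt : ℝ) (hθ : 0 < θ)
    (hΔt : 0 < Δt)
    (S : Matrix (Fin m) (Fin d) ℝ) (hS : (S * Sᵀ).PosDef)
    (A : Matrix (Fin m) (Fin n) ℝ) (a : Fin m → ℝ) (Ξ : Fin d → ℝ)
    (Λ : Matrix (Fin n) (Fin d) ℝ) (b : Fin n → ℝ) (Bt : Matrix (Fin n) (Fin n) ℝ)
    (P : Matrix (Fin n) (Fin n) ℝ) (hP : P.IsSymm) (p : Fin n → ℝ)
    (Ψ : Matrix (Fin m) (Fin m) ℝ) (hΨ : Ψ.PosDef) (x : Fin n → ℝ)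
    (h𝒜 : (-(Δt • (Λᵀ * P * Λ) - (1 : Matrix (Fin d) (Fin d) ℝ))).PosDef) :
    FFun θ Δt S A a Ξ Λ b Bt P p Ψ x
      -- h*
      ((S * Sᵀ)⁻¹ *ᵥ
        (((1 : Matrix (Fin m) (Fin m) ℝ)
            - θ • (S * (calB θ Δt S Λ P)⁻¹ * Sᵀ * (S * Sᵀ)⁻¹)) *ᵥ (a + A *ᵥ x)
          + (S * (calB θ Δt S Λ P)⁻¹) *ᵥ
              (Λᵀ *ᵥ (P *ᵥ (Δt • b + Bt *ᵥ x)) + Λᵀ *ᵥ p + θ • Ξ)))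
      -- γ*
      ((calB θ Δt S Λ P)⁻¹ *ᵥ
        ((-θ) • (Sᵀ *ᵥ ((S * Sᵀ)⁻¹ *ᵥ (a + A *ᵥ x)))
          + Λᵀ *ᵥ (P *ᵥ (Δt • b + Bt *ᵥ x)) + Λᵀ *ᵥ p + θ • Ξ))
      -- η* = 0
      0
    = (1 / 2 : ℝ) * (x ⬝ᵥ
        (((-(θ * Δt)) • (Aᵀ * (S * Sᵀ)⁻¹ * A)
          + (θ ^ 2 * Δt) •
              (Aᵀ * (S * Sᵀ)⁻¹ * S * (calB θ Δt S Λ P)⁻¹ * Sᵀ * (S * Sᵀ)⁻¹ * A)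
          - (2 * θ * Δt) •
              (Aᵀ * (S * Sᵀ)⁻¹ * S * (calB θ Δt S Λ P)⁻¹ * Λᵀ * P * Bt)
          + Δt • (Btᵀ * P * Λ * (calB θ Δt S Λ P)⁻¹ * Λᵀ * P * Bt)) *ᵥ x))
      + x ⬝ᵥ
        ((-(θ * Δt)) • (Aᵀ *ᵥ ((S * Sᵀ)⁻¹ *ᵥ a))
          + Δt • ((((-θ) • (Aᵀ * (S * Sᵀ)⁻¹ * S)) + Btᵀ * P * Λ) *ᵥ
              ((calB θ Δt S Λ P)⁻¹ *ᵥ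
                ((-θ) • (Sᵀ *ᵥ ((S * Sᵀ)⁻¹ *ᵥ a))
                  + Λᵀ *ᵥ (Δt • (P *ᵥ b) + p) + θ • Ξ))))
      + ((-(θ / 2)) * (a ⬝ᵥ ((S * Sᵀ)⁻¹ *ᵥ a)) * Δt
          + (1 / 2 : ℝ) *
            (((-θ) • (a ᵥ* ((S * Sᵀ)⁻¹ * S)) + Δt • (b ᵥ* (P * Λ)) + (p ᵥ* Λ) + θ • Ξ) ⬝ᵥ
              ((calB θ Δt S Λ P)⁻¹ *ᵥ
                ((-θ) • (Sᵀ *ᵥ ((S * Sᵀ)⁻¹ *ᵥ a))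
                  + Δt • (Λᵀ *ᵥ (P *ᵥ b)) + Λᵀ *ᵥ p + θ • Ξ))) * Δt) :=
  F_at_saddle_quadratic_representation_general θ Δt hθ S hS A a Ξ Λ b Bt P hP p Ψ x h𝒜
end

section
/- Fix θ > 0, Δt > 0, Σ ∈ ℝ^{m×d} with ΣΣᵀ positive definite, A ∈ ℝ^{m×n}, a ∈ ℝ^m, Ξ ∈ ℝ^d, Λ ∈ ℝ^{n×d}, b ∈ ℝ^n, B̃ ∈ ℝ^{n×n}, a symmetric matrix P ∈ ℝ^{n×n}, p ∈ ℝ^n, and x ∈ ℝ^n. Set 𝒜 := ΛᵀPΛΔt − I_d, assume 𝒜 is negative definite, set ℬ := θΣᵀ(ΣΣᵀ)⁻¹Σ − 𝒜, and define h^Kelly := (ΣΣᵀ)⁻¹(a + Ax), γ* := ℬ⁻¹(−θΣᵀ(ΣΣᵀ)⁻¹(a+Ax) + ΛᵀP(bΔt+B̃x) + Λᵀp + θΞ), and h* := (ΣΣᵀ)⁻¹[(I_m − θΣℬ⁻¹Σᵀ(ΣΣᵀ)⁻¹)(a+Ax) + Σℬ⁻¹(ΛᵀP(bΔt+B̃x)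 + Λᵀp + θΞ)]. Then h* = h^Kelly + (ΣΣᵀ)⁻¹Σγ*; that is, the optimal investment strategy is the Kelly portfolio penalized by the image of the adversarial control γ* under the linear map (ΣΣᵀ)⁻¹Σ. -/
open Matrix

private lemma penalized_aux {m d : ℕ} (θ : ℝ) (K : Matrix (Fin m) (Fin m) ℝ)
    (S : Matrix (Fin m) (Fin d) ℝ) (C : Matrix (Fin d) (Fin d) ℝ)
    (u : Fin m → ℝ) (w : Fin d → ℝ) :
    K *ᵥ (((1 : Matrix (Fin m) (Fin m) ℝ) - θ • (S * C * Sᵀ * K)) *ᵥ u + (S * C) *ᵥ w)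
      = K *ᵥ u + K *ᵥ (S *ᵥ (C *ᵥ ((-θ) • (Sᵀ *ᵥ (K *ᵥ u)) + w))) := by
  simp only [Matrix.sub_mulVec, Matrix.mulVec_add, Matrix.smul_mulVec,
    Matrix.mulVec_smul, Matrix.one_mulVec, Matrix.mulVec_mulVec, neg_smul,
    Matrix.mulVec_neg, Matrix.mulVec_sub, Matrix.mul_assoc]
  abel

/-- Penalized Kelly allocation: the optimal investment strategy is the Kelly portfolio
plus the image of the adversarial control `γ*` under the linear map `(ΣΣᵀ)⁻¹Σ`:
`h* = h^Kelly + (ΣΣᵀ)⁻¹Σγ*`. -/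
theorem optimal_control_is_penalized_Kelly {m n d : ℕ} (θ Δt : ℝ) (hθ : 0 < θ)
    (hΔt : 0 < Δt)
    (S : Matrix (Fin m) (Fin d) ℝ) (hS : (S * Sᵀ).PosDef)
    (A : Matrix (Fin m) (Fin n) ℝ) (a : Fin m → ℝ) (Ξ : Fin d → ℝ)
    (Λ : Matrix (Fin n) (Fin d) ℝ) (b : Fin n → ℝ) (Bt : Matrix (Fin n) (Fin n) ℝ)
    (P : Matrix (Fin n) (Fin n) ℝ) (hP : P.IsSymm) (p : Fin n → ℝ) (x : Fin n → ℝ)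
    (h𝒜 : (-(Δt • (Λᵀ * P * Λ) - (1 : Matrix (Fin d) (Fin d) ℝ))).PosDef) :
    (S * Sᵀ)⁻¹ *ᵥ
      (((1 : Matrix (Fin m) (Fin m) ℝ)
          - θ • (S * (calB θ Δt S Λ P)⁻¹ * Sᵀ * (S * Sᵀ)⁻¹)) *ᵥ (a + A *ᵥ x)
        + (S * (calB θ Δt S Λ P)⁻¹) *ᵥ
            (Λᵀ *ᵥ (P *ᵥ (Δt • b + Bt *ᵥ x)) + Λᵀ *ᵥ p + θ • Ξ))
    = (S * Sᵀ)⁻¹ *ᵥ (a + A *ᵥ x)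
      + (S * Sᵀ)⁻¹ *ᵥ (S *ᵥ
          ((calB θ Δt S Λ P)⁻¹ *ᵥ
            ((-θ) • (Sᵀ *ᵥ ((S * Sᵀ)⁻¹ *ᵥ (a + A *ᵥ x)))
              + Λᵀ *ᵥ (P *ᵥ (Δt • b + Bt *ᵥ x)) + Λᵀ *ᵥ p + θ • Ξ))) := by
  rw [show (-θ) • (Sᵀ *ᵥ ((S * Sᵀ)⁻¹ *ᵥ (a + A *ᵥ x)))
        + Λᵀ *ᵥ (P *ᵥ (Δt • b + Bt *ᵥ x)) + Λᵀ *ᵥ p + θ • Ξ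
      = (-θ) • (Sᵀ *ᵥ ((S * Sᵀ)⁻¹ *ᵥ (a + A *ᵥ x)))
        + (Λᵀ *ᵥ (P *ᵥ (Δt • b + Bt *ᵥ x)) + Λᵀ *ᵥ p + θ • Ξ) by abel]
  exact penalized_aux θ ((S * Sᵀ)⁻¹) S ((calB θ Δt S Λ P)⁻¹) (a + A *ᵥ x)
    (Λᵀ *ᵥ (P *ᵥ (Δt • b + Bt *ᵥ x)) + Λᵀ *ᵥ p + θ • Ξ)
end

section
/- Fix θ > 0, Δt > 0, Σ ∈ ℝ^{m×d} with ΣΣᵀ positive definite, A ∈ ℝ^{m×n}, a ∈ ℝ^m, Ξ ∈ ℝ^d, Λ ∈ ℝ^{n×d}, b ∈ ℝ^n, B̃ ∈ ℝ^{n×n}, a symmetric matrix P ∈ ℝ^{n×n}, p ∈ ℝ^n, and x ∈ ℝ^n. Set 𝒜 := ΛᵀPΛΔt − I_d, assume 𝒜 is negative definite, and set ℬ := θΣᵀ(ΣΣᵀ)⁻¹Σ − 𝒜. Define h^Kelly := (ΣΣᵀ)⁻¹(a + Ax), h̃^Kelly := (θ+1)(I_m − θ(ΣΣᵀ)⁻¹Σℬ⁻¹Σᵀ)h^Kelly,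 h̃^Bench := (θ+1)(ΣΣᵀ)⁻¹Σℬ⁻¹Ξ, h̃^IHP := ((θ+1)/θ)(ΣΣᵀ)⁻¹Σℬ⁻¹Λᵀ(P(bΔt+B̃x) + p), and h* := (ΣΣᵀ)⁻¹[(I_m − θΣℬ⁻¹Σᵀ(ΣΣᵀ)⁻¹)(a+Ax) + Σℬ⁻¹(ΛᵀP(bΔt+B̃x) + Λᵀp + θΞ)]. Then h* = (1/(θ+1))·h̃^Kelly + (θ/(θ+1))·h̃^Bench + (θ/(θ+1))·h̃^IHP. -/
open Matrix

/-- Rotated and rescaled fractional Kelly strategy, part II: the optimal allocation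
decomposes as
`h* = (1/(θ+1))·h̃^Kelly + (θ/(θ+1))·h̃^Bench + (θ/(θ+1))·h̃^IHP`, with the rotated and
rescaled Kelly, benchmark-tracking, and intertemporal hedging funds. -/
theorem fractional_Kelly_decomposition_II {m n d : ℕ} (θ Δt : ℝ) (hθ : 0 < θ)
    (hΔt : 0 < Δt)
    (S : Matrix (Fin m) (Fin d) ℝ) (hS : (S * Sᵀ).PosDef)
    (A : Matrix (Fin m) (Fin n) ℝ) (a : Fin m → ℝ) (Ξ : Fin d → ℝ)
    (Λ : Matrix (Fin n) (Fin d) ℝ) (b : Fin n → ℝ) (Bt : Matrix (Fin n) (Fin n) ℝ)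
    (P : Matrix (Fin n) (Fin n) ℝ) (hP : P.IsSymm) (p : Fin n → ℝ) (x : Fin n → ℝ)
    (h𝒜 : (-(Δt • (Λᵀ * P * Λ) - (1 : Matrix (Fin d) (Fin d) ℝ))).PosDef) :
    (S * Sᵀ)⁻¹ *ᵥ
      (((1 : Matrix (Fin m) (Fin m) ℝ)
          - θ • (S * (calB θ Δt S Λ P)⁻¹ * Sᵀ * (S * Sᵀ)⁻¹)) *ᵥ (a + A *ᵥ x)
        + (S * (calB θ Δt S Λ P)⁻¹) *ᵥ
            (Λᵀ *ᵥ (P *ᵥ (Δt • b + Bt *ᵥ x)) + Λᵀ *ᵥ p + θ • Ξ))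
    = (1 / (θ + 1)) •
        ((θ + 1) • ((((1 : Matrix (Fin m) (Fin m) ℝ)
            - θ • ((S * Sᵀ)⁻¹ * S * (calB θ Δt S Λ P)⁻¹ * Sᵀ)) *ᵥ
            ((S * Sᵀ)⁻¹ *ᵥ (a + A *ᵥ x)))))
      + (θ / (θ + 1)) •
          ((θ + 1) • ((S * Sᵀ)⁻¹ *ᵥ (S *ᵥ ((calB θ Δt S Λ P)⁻¹ *ᵥ Ξ))))
      + (θ / (θ + 1)) •
          (((θ + 1) / θ) • ((S * Sᵀ)⁻¹ *ᵥ (S *ᵥ ((calB θ Δt S Λ P)⁻¹ *ᵥ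
            (Λᵀ *ᵥ (P *ᵥ (Δt • b + Bt *ᵥ x) + p)))))) := by
  have h1 : θ + 1 ≠ 0 := by positivity
  have h2 : θ ≠ 0 := ne_of_gt hθ
  have e1 : (1 / (θ + 1)) * (θ + 1) = 1 := by field_simp
  have e2 : (θ / (θ + 1)) * (θ + 1) = θ := by field_simp
  have e3 : (θ / (θ + 1)) * ((θ + 1) / θ) = 1 := by field_simp
  simp only [smul_smul, e1, e2, e3, one_smul,
    Matrix.add_mulVec, Matrix.sub_mulVec, Matrix.mulVec_add, Matrix.mulVec_smul,
    Matrix.smul_mulVec, Matrix.mulVec_mulVec, Matrix.one_mulVec,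
    Matrix.mulVec_sub, Matrix.sub_mul, Matrix.smul_mul, Matrix.mul_smul,
    Matrix.one_mul, Matrix.mul_assoc]
  module
end
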